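/- arXiv:2603.22248 — 7 statements merged into one kernel-verified Lean document; each statement's English description precedes it below -/
import Mathlib

section
/- For a random vector (Z^1,...,Z^d) on a finite alphabet and any fixed index j in [d], the KL divergence between the joint distribution and the product of its marginals is at most the sum over all i ≠ j of the mutual information I(Z^i; Z^{\setminus i}), where Z^{\setminus i} denotes the vector of all coordinates other than i. -/
open Finset

/-- Distribution (pmf) of a random variable `X` on a finite probability space `(Ω, μ)`. -/
noncomputable def distOf {Ω α : Type*} [Fintype Ω] [DecidableEq α]
    (μ : Ω → ℝ) (X : Ω → α) : α → ℝ :=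
  fun a => ∑ ω ∈ Finset.univ.filter (fun ω => X ω = a), μ ω

/-- Kullback–Leibler divergence on a finite alphabet (convention `0 * log _ = 0`). -/
noncomputable def KLdiv {α : Type*} [Fintype α] (p q : α → ℝ) : ℝ :=
  ∑ a, p a * Real.log (p a / q a)

/-- Shannon entropy of a pmf on a finite alphabet. -/
noncomputable def entOf {α : Type*} [Fintype α] (p : α → ℝ) : ℝ :=
  -∑ a, p a * Real.log (p a)

/-- Mutual information `I(X;Y) = KL(p_{X,Y} ‖ p_X p_Y)`. -/
noncomputable def mutInfo {Ω α β : Type*} [Fintype Ω] [Fintype α] [Fintype β]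
    [DecidableEq α] [DecidableEq β]
    (μ : Ω → ℝ) (X : Ω → α) (Y : Ω → β) : ℝ :=
  KLdiv (distOf μ (fun ω => (X ω, Y ω))) (fun ab => distOf μ X ab.1 * distOf μ Y ab.2)

/-- The probability measure `μ` conditioned on the event `Z = z`. -/
noncomputable def pcond {Ω γ : Type*} [Fintype Ω] [DecidableEq γ]
    (μ : Ω → ℝ) (Z : Ω → γ) (z : γ) : Ω → ℝ :=
  fun ω => if Z ω = z then μ ω / distOf μ Z z else 0

/-- Conditional mutual information `I(X;Y∣Z)`. -/
noncomputable def condMutInfo {Ω α β γ : Type*} [Fintype Ω] [Fintype α] [Fintype β] [Fintype γ]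
    [DecidableEq α] [DecidableEq β] [DecidableEq γ]
    (μ : Ω → ℝ) (X : Ω → α) (Y : Ω → β) (Z : Ω → γ) : ℝ :=
  ∑ z, distOf μ Z z * mutInfo (pcond μ Z z) X Y

/-- Restriction of `x : Fin L → 𝕏` to a subset `S` of coordinates. -/
def restr {L : ℕ} {𝕏 : Type*} (S : Finset (Fin L)) (x : Fin L → 𝕏) : ↥S → 𝕏 :=
  fun i => x i.1

/-- `μ` conditioned on the event that `X` agrees with `x` on the coordinate set `W`. -/
noncomputable def condOn {Ω : Type*} {L : ℕ} {𝕏 : Type*} [Fintype Ω] [Fintype 𝕏] [DecidableEq 𝕏]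
    (μ : Ω → ℝ) (X : Ω → Fin L → 𝕏) (W : Finset (Fin L)) (x : Fin L → 𝕏) : Ω → ℝ :=
  pcond μ (fun ω => restr W (X ω)) (restr W x)


/-- Entropy written as an expectation over `Ω`. -/
noncomputable def Hm {Ω α : Type*} [Fintype Ω] [DecidableEq α]
    (μ : Ω → ℝ) (X : Ω → α) : ℝ :=
  -∑ ω, μ ω * Real.log (distOf μ X (X ω))

section Helpers

variable {Ω α β γ : Type*} [Fintype Ω] [Fintype α] [Fintype β] [Fintype γ]
  [DecidableEq α] [DecidableEq β] [DecidableEq γ] {μ : Ω → ℝ}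

lemma distOf_nonneg (hmu0 : ∀ ω, 0 ≤ μ ω) (X : Ω → α) (a : α) : 0 ≤ distOf μ X a :=
  Finset.sum_nonneg fun ω _ => hmu0 ω

lemma lotus (μ : Ω → ℝ) (X : Ω → α) (F : α → ℝ) :
    ∑ a, distOf μ X a * F a = ∑ ω, μ ω * F (X ω) := by
  classical
  unfold distOf
  rw [← Finset.sum_fiberwise Finset.univ X (fun ω => μ ω * F (X ω))]
  refine Finset.sum_congr rfl fun a _ => ?_
  rw [Finset.sum_mul]
  refine Finset.sum_congr rfl fun ω hω => ?_
  rw [(Finset.mem_filter.mp hω).2]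

lemma sum_distOf (μ : Ω → ℝ) (X : Ω → α) : ∑ a, distOf μ X a = ∑ ω, μ ω := by
  have := lotus μ X (fun _ => 1); simpa using this

lemma distOf_le_of_imp (hmu0 : ∀ ω, 0 ≤ μ ω) (X : Ω → α) (Y : Ω → β) (a : α) (b : β)
    (h : ∀ ω, X ω = a → Y ω = b) : distOf μ X a ≤ distOf μ Y b := by
  apply Finset.sum_le_sum_of_subset_of_nonneg
  · intro ω hω
    simp only [Finset.mem_filter, Finset.mem_univ, true_and] at *
    exact h ω hω
  · exact fun ω _ _ => hmu0 ω

lemma mu_le_distOf (hmu0 : ∀ ω, 0 ≤ μ ω) (X : Ω → α) (ω : Ω) :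
    μ ω ≤ distOf μ X (X ω) := by
  apply Finset.single_le_sum (fun ω' _ => hmu0 ω')
  simp

lemma sum_distOf_pair_fst (μ : Ω → ℝ) (X : Ω → α) (Y : Ω → β) (b : β) :
    ∑ a, distOf μ (fun ω => (X ω, Y ω)) (a, b) = distOf μ Y b := by
  classical
  unfold distOf
  rw [← Finset.sum_fiberwise (Finset.univ.filter fun ω => Y ω = b) X μ]
  refine Finset.sum_congr rfl fun a _ => ?_
  congr 1
  ext ω
  simp [Finset.filter_filter, Prod.ext_iff, and_comm]

lemma gibbs {p q : α → ℝ} (hp0 : ∀ a, 0 ≤ p a) (hq0 : ∀ a, 0 ≤ q a)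
    (hp1 : ∑ a, p a = 1) (hq1 : ∑ a, q a ≤ 1)
    (hsupp : ∀ a, p a ≠ 0 → q a ≠ 0) : 0 ≤ KLdiv p q := by
  have key : ∀ a, p a - q a ≤ p a * Real.log (p a / q a) := by
    intro a
    rcases (hp0 a).eq_or_lt with h | hpa
    · simp [← h]; exact hq0 a
    · have hqa : 0 < q a := (hq0 a).lt_of_ne (Ne.symm (hsupp a (ne_of_gt hpa)))
      have h1 : Real.log (q a / p a) ≤ q a / p a - 1 :=
        Real.log_le_sub_one_of_pos (div_pos hqa hpa)
      have h2 : Real.log (p a / q a) = -(Real.log (q a / p a)) := by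
        rw [Real.log_div (ne_of_gt hpa) (ne_of_gt hqa), Real.log_div (ne_of_gt hqa) (ne_of_gt hpa)]
        ring
      have h3 : p a * Real.log (q a / p a) ≤ p a * (q a / p a - 1) :=
        mul_le_mul_of_nonneg_left h1 (le_of_lt hpa)
      have h4 : p a * (q a / p a - 1) = q a - p a := by field_simp
      rw [h2]
      nlinarith
  have hsum : ∑ a, (p a - q a) ≤ KLdiv p q := Finset.sum_le_sum fun a _ => key a
  rw [Finset.sum_sub_distrib, hp1] at hsum
  linarith

lemma Hm_congr (μ : Ω → ℝ) (X : Ω → α) (Y : Ω → β)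
    (h : ∀ ω ω', X ω = X ω' ↔ Y ω = Y ω') : Hm μ X = Hm μ Y := by
  unfold Hm
  congr 1
  refine Finset.sum_congr rfl fun ω _ => ?_
  have hd : distOf μ X (X ω) = distOf μ Y (Y ω) := by
    unfold distOf; congr 1; ext ω'; simp [h ω' ω]
  rw [hd]

lemma KLdiv_distOf (μ : Ω → ℝ) (X : Ω → α) (q : α → ℝ) :
    KLdiv (distOf μ X) q = ∑ ω, μ ω * Real.log (distOf μ X (X ω) / q (X ω)) := by
  unfold KLdiv
  exact lotus μ X (fun a => Real.log (distOf μ X a / q a))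

lemma mutInfo_eq_Hm (hmu0 : ∀ ω, 0 ≤ μ ω) (X : Ω → α) (Y : Ω → β) :
    mutInfo μ X Y = Hm μ X + Hm μ Y - Hm μ (fun ω => (X ω, Y ω)) := by
  unfold mutInfo
  rw [KLdiv_distOf]
  have step : ∀ ω ∈ Finset.univ (α := Ω),
      μ ω * Real.log (distOf μ (fun ω => (X ω, Y ω)) ((fun ω => (X ω, Y ω)) ω) /
        (distOf μ X (((fun ω => (X ω, Y ω)) ω)).1 * distOf μ Y (((fun ω => (X ω, Y ω)) ω)).2))
      = μ ω * Real.log (distOf μ (fun ω => (X ω, Y ω)) (X ω, Y ω))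
        - μ ω * Real.log (distOf μ X (X ω)) - μ ω * Real.log (distOf μ Y (Y ω)) := by
    intro ω _
    rcases (hmu0 ω).eq_or_lt with h | h
    · simp [← h]
    · have hP : 0 < distOf μ (fun ω => (X ω, Y ω)) (X ω, Y ω) :=
        lt_of_lt_of_le h (mu_le_distOf hmu0 _ ω)
      have hX : 0 < distOf μ X (X ω) := lt_of_lt_of_le h (mu_le_distOf hmu0 X ω)
      have hY : 0 < distOf μ Y (Y ω) := lt_of_lt_of_le h (mu_le_distOf hmu0 Y ω)
      simp only
      rw [Real.log_div hP.ne' (mul_pos hX hY).ne', Real.log_mul hX.ne' hY.ne']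
      ring
  rw [Finset.sum_congr rfl step]
  unfold Hm
  rw [Finset.sum_sub_distrib, Finset.sum_sub_distrib]
  ring

lemma submod (hmu0 : ∀ ω, 0 ≤ μ ω) (hmu1 : ∑ ω, μ ω = 1)
    (X : Ω → α) (Y : Ω → β) (g : β → γ) :
    Hm μ (fun ω => (X ω, Y ω)) + Hm μ (fun ω => g (Y ω)) ≤
      Hm μ (fun ω => (X ω, g (Y ω))) + Hm μ Y := by
  classical
  set W : Ω → γ := fun ω => g (Y ω) with hW
  set q : α × β → ℝ := fun ab =>
    distOf μ (fun ω => (X ω, W ω)) (ab.1, g ab.2) * distOf μ Y ab.2 / distOf μ W (g ab.2)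
    with hq
  have hYW : ∀ b, distOf μ Y b ≤ distOf μ W (g b) := fun b =>
    distOf_le_of_imp hmu0 Y W b (g b) (fun ω h => by rw [hW]; exact congrArg g h)
  have hKL : 0 ≤ KLdiv (distOf μ (fun ω => (X ω, Y ω))) q := by
    apply gibbs (distOf_nonneg hmu0 _)
    · intro ab
      exact div_nonneg (mul_nonneg (distOf_nonneg hmu0 _ _) (distOf_nonneg hmu0 _ _))
        (distOf_nonneg hmu0 _ _)
    · rw [sum_distOf, hmu1]
    · have : ∑ ab : α × β, q ab = ∑ b : β, distOf μ Y b := by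
        rw [Fintype.sum_prod_type_right]
        refine Finset.sum_congr rfl fun b _ => ?_
        have hinner : ∑ a : α, q (a, b)
            = (∑ a : α, distOf μ (fun ω => (X ω, W ω)) (a, g b)) * distOf μ Y b
              / distOf μ W (g b) := by
          rw [Finset.sum_mul, Finset.sum_div]
        rw [hinner, sum_distOf_pair_fst]
        rcases eq_or_ne (distOf μ W (g b)) 0 with h0 | h0
        · have : distOf μ Y b = 0 := le_antisymm (h0 ▸ hYW b) (distOf_nonneg hmu0 _ _)
          rw [h0, this]; simp
        · field_simp
      rw [this, sum_distOf, hmu1]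
    · rintro ⟨a, b⟩ hne
      have hp : 0 < distOf μ (fun ω => (X ω, Y ω)) (a, b) :=
        (distOf_nonneg hmu0 _ _).lt_of_ne (Ne.symm hne)
      have hA : 0 < distOf μ (fun ω => (X ω, W ω)) (a, g b) :=
        lt_of_lt_of_le hp (distOf_le_of_imp hmu0 _ _ _ _ (fun ω h => by
          rw [Prod.ext_iff] at h ⊢
          exact ⟨h.1, by rw [hW]; exact congrArg g h.2⟩))
      have hB : 0 < distOf μ Y b :=
        lt_of_lt_of_le hp (distOf_le_of_imp hmu0 _ _ _ _ (fun ω h => (Prod.ext_iff.mp h).2))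
      have hC : 0 < distOf μ W (g b) := lt_of_lt_of_le hB (hYW b)
      exact (div_pos (mul_pos hA hB) hC).ne'
  have hid : KLdiv (distOf μ (fun ω => (X ω, Y ω))) q
      = Hm μ (fun ω => (X ω, W ω)) + Hm μ Y - Hm μ (fun ω => (X ω, Y ω)) - Hm μ W := by
    rw [KLdiv_distOf]
    have step : ∀ ω ∈ Finset.univ (α := Ω),
        μ ω * Real.log (distOf μ (fun ω => (X ω, Y ω)) (X ω, Y ω) / q (X ω, Y ω))
        = μ ω * Real.log (distOf μ (fun ω => (X ω, Y ω)) (X ω, Y ω))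
          + μ ω * Real.log (distOf μ W (W ω))
          - μ ω * Real.log (distOf μ (fun ω => (X ω, W ω)) (X ω, W ω))
          - μ ω * Real.log (distOf μ Y (Y ω)) := by
      intro ω _
      rcases (hmu0 ω).eq_or_lt with h | h
      · simp [← h]
      · have hP : 0 < distOf μ (fun ω => (X ω, Y ω)) (X ω, Y ω) :=
          lt_of_lt_of_le h (mu_le_distOf hmu0 _ ω)
        have hA : 0 < distOf μ (fun ω => (X ω, W ω)) (X ω, W ω) :=
          lt_of_lt_of_le h (mu_le_distOf hmu0 _ ω)
        have hB : 0 < distOf μ Y (Y ω) := lt_of_lt_of_le h (mu_le_distOf hmu0 Y ω)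
        have hC : 0 < distOf μ W (W ω) := lt_of_lt_of_le h (mu_le_distOf hmu0 W ω)
        have hqval : q (X ω, Y ω)
            = distOf μ (fun ω => (X ω, W ω)) (X ω, W ω) * distOf μ Y (Y ω)
              / distOf μ W (W ω) := by
          rw [hq]
        rw [hqval, Real.log_div hP.ne' (by positivity),
          Real.log_div (mul_pos hA hB).ne' hC.ne', Real.log_mul hA.ne' hB.ne']
        ring
    rw [Finset.sum_congr rfl step]
    unfold Hm
    rw [Finset.sum_sub_distrib, Finset.sum_sub_distrib, Finset.sum_add_distrib]
    ring
  linarith [hid ▸ hKL]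

lemma mutInfo_comp_le (hmu0 : ∀ ω, 0 ≤ μ ω) (hmu1 : ∑ ω, μ ω = 1)
    (X : Ω → α) (Y : Ω → β) (g : β → γ) :
    mutInfo μ X (fun ω => g (Y ω)) ≤ mutInfo μ X Y := by
  rw [mutInfo_eq_Hm hmu0, mutInfo_eq_Hm hmu0]
  have := submod hmu0 hmu1 X Y g
  linarith

lemma KLdiv_prod_eq (hmu0 : ∀ ω, 0 ≤ μ ω) {d : ℕ} {𝕏 : Type*} [Fintype 𝕏] [DecidableEq 𝕏]
    (Z : Ω → Fin d → 𝕏) :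
    KLdiv (distOf μ Z) (fun x => ∏ i, distOf μ (fun ω => Z ω i) (x i)) =
      (∑ i, Hm μ (fun ω => Z ω i)) - Hm μ Z := by
  rw [KLdiv_distOf]
  have step : ∀ ω ∈ Finset.univ (α := Ω),
      μ ω * Real.log (distOf μ Z (Z ω) / ∏ i, distOf μ (fun ω => Z ω i) (Z ω i))
      = μ ω * Real.log (distOf μ Z (Z ω))
        - ∑ i, μ ω * Real.log (distOf μ (fun ω => Z ω i) (Z ω i)) := by
    intro ω _
    rcases (hmu0 ω).eq_or_lt with h | h
    · simp [← h]
    · have hZ : 0 < distOf μ Z (Z ω) := lt_of_lt_of_le h (mu_le_distOf hmu0 Z ω)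
      have hZi : ∀ i, 0 < distOf μ (fun ω => Z ω i) (Z ω i) :=
        fun i => lt_of_lt_of_le h (mu_le_distOf hmu0 _ ω)
      have hprod : 0 < ∏ i, distOf μ (fun ω => Z ω i) (Z ω i) :=
        Finset.prod_pos fun i _ => hZi i
      rw [Real.log_div hZ.ne' hprod.ne',
        Real.log_prod (fun i _ => (hZi i).ne'), mul_sub, Finset.mul_sum]
  rw [Finset.sum_congr rfl step, Finset.sum_sub_distrib, Finset.sum_comm]
  unfold Hm
  simp only [Finset.sum_neg_distrib]
  ring

end Helpers


/-- Mask a vector outside `S` by a default value. -/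
def mask {d : ℕ} {𝕏 : Type*} [DecidableEq 𝕏] (x0 : 𝕏) (S : Finset (Fin d)) (x : Fin d → 𝕏) :
    Fin d → 𝕏 :=
  fun k => if k ∈ S then x k else x0

section MainHelpers

variable {Ω 𝕏 : Type*} [Fintype Ω] [Fintype 𝕏] [DecidableEq 𝕏] {μ : Ω → ℝ}
  {d : ℕ}

lemma Hm_mask_pair (hmu0 : ∀ ω, 0 ≤ μ ω) (x0 : 𝕏) (Z : Ω → Fin d → 𝕏) (i : Fin d)
    (T : Finset (Fin d)) (hiT : i ∉ T) :
    Hm μ (fun ω => (Z ω i, mask x0 T (Z ω))) = Hm μ (fun ω => mask x0 (insert i T) (Z ω)) := by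
  apply Hm_congr
  intro ω ω'
  constructor
  · intro h
    obtain ⟨h1, h2⟩ := Prod.ext_iff.mp h
    funext k
    unfold mask
    by_cases hk : k ∈ insert i T
    · rw [if_pos hk, if_pos hk]
      rcases Finset.mem_insert.mp hk with rfl | hkT
      · exact h1
      · have := congrFun h2 k
        simpa [mask, hkT] using this
    · rw [if_neg hk, if_neg hk]
  · intro h
    have hZeq : ∀ k, k ∈ insert i T → Z ω k = Z ω' k := by
      intro k hk
      have := congrFun h k
      simpa [mask, hk] using this
    refine Prod.ext_iff.mpr ⟨hZeq i (Finset.mem_insert_self i T), ?_⟩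
    funext k
    by_cases hkT : k ∈ T
    · simp [mask, hkT, hZeq k (Finset.mem_insert_of_mem hkT)]
    · simp [mask, hkT]

/-- Reconstruct a masked vector from the coordinates other than `i`. -/
def unmask {d : ℕ} {𝕏 : Type*} [DecidableEq 𝕏] (x0 : 𝕏) (i : Fin d) (T : Finset (Fin d))
    (y : {k : Fin d // k ≠ i} → 𝕏) : Fin d → 𝕏 :=
  fun k => if hk : k = i then x0 else if k ∈ T then y ⟨k, hk⟩ else x0

lemma mask_eq_comp (x0 : 𝕏) (Z : Ω → Fin d → 𝕏) (i : Fin d)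
    (T : Finset (Fin d)) (hiT : i ∉ T) :
    (fun ω => mask x0 T (Z ω)) =
      (fun ω => unmask x0 i T (fun k : {k : Fin d // k ≠ i} => Z ω k.1)) := by
  funext ω k
  by_cases hk : k = i
  · subst hk
    simp [mask, unmask, hiT]
  · simp [mask, unmask, hk]

set_option maxHeartbeats 1600000 in
lemma chain_step (hmu0 : ∀ ω, 0 ≤ μ ω) (hmu1 : ∑ ω, μ ω = 1) (x0 : 𝕏)
    (Z : Ω → Fin d → 𝕏) (i : Fin d) (T : Finset (Fin d)) (hiT : i ∉ T) :
    Hm μ (fun ω => Z ω i) + Hm μ (fun ω => mask x0 T (Z ω))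
      - Hm μ (fun ω => mask x0 (insert i T) (Z ω)) ≤
    mutInfo μ (fun ω => Z ω i) (fun ω => (fun k : {k : Fin d // k ≠ i} => Z ω k.1)) := by
  have hchain : Hm μ (fun ω => Z ω i) + Hm μ (fun ω => mask x0 T (Z ω))
      - Hm μ (fun ω => mask x0 (insert i T) (Z ω))
      = mutInfo μ (fun ω => Z ω i) (fun ω => mask x0 T (Z ω)) := by
    rw [mutInfo_eq_Hm hmu0, Hm_mask_pair hmu0 x0 Z i T hiT]
  calc Hm μ (fun ω => Z ω i) + Hm μ (fun ω => mask x0 T (Z ω))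
      - Hm μ (fun ω => mask x0 (insert i T) (Z ω))
      = mutInfo μ (fun ω => Z ω i) (fun ω => mask x0 T (Z ω)) := hchain
    _ = mutInfo μ (fun ω => Z ω i)
          (fun ω => unmask x0 i T (fun k : {k : Fin d // k ≠ i} => Z ω k.1)) := by
        rw [mask_eq_comp x0 Z i T hiT]
    _ ≤ mutInfo μ (fun ω => Z ω i)
          (fun ω => (fun k : {k : Fin d // k ≠ i} => Z ω k.1)) :=
        mutInfo_comp_le hmu0 hmu1 (fun ω => Z ω i)
          (fun ω => (fun k : {k : Fin d // k ≠ i} => Z ω k.1)) (unmask x0 i T)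

lemma Hm_mask_singleton (x0 : 𝕏) (Z : Ω → Fin d → 𝕏) (j : Fin d) :
    Hm μ (fun ω => Z ω j) = Hm μ (fun ω => mask x0 {j} (Z ω)) := by
  apply Hm_congr
  intro ω ω'
  constructor
  · intro h
    funext k
    unfold mask
    split_ifs with hk
    · rw [Finset.mem_singleton] at hk
      subst hk
      exact h
    · rfl
  · intro h
    have := congrFun h j
    simpa [mask] using this

end MainHelpers

set_option maxHeartbeats 1000000 in
/-- KL between a joint distribution and the product of its marginals is at most the sum over
`i ≠ j` of the mutual informations `I(Z^i; Z^{∖i})`. -/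
theorem kl_le_sum_mutInfo_rest
    {Ω 𝕏 : Type*} [Fintype Ω] [Fintype 𝕏] [DecidableEq 𝕏]
    (μ : Ω → ℝ) (hmu0 : ∀ ω, 0 ≤ μ ω) (hmu1 : ∑ ω, μ ω = 1)
    (d : ℕ) (Z : Ω → Fin d → 𝕏) (j : Fin d) :
    KLdiv (distOf μ Z) (fun x => ∏ i, distOf μ (fun ω => Z ω i) (x i)) ≤
      ∑ i ∈ Finset.univ.erase j,
        mutInfo μ (fun ω => Z ω i)
          (fun ω => (fun k : {k : Fin d // k ≠ i} => Z ω k.1)) := by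
  have hΩ : Nonempty Ω := by
    by_contra h
    rw [not_nonempty_iff] at h
    rw [Finset.univ_eq_empty, Finset.sum_empty] at hmu1
    exact one_ne_zero hmu1.symm
  obtain ⟨ω0⟩ := hΩ
  set x0 : 𝕏 := Z ω0 j with hx0
  have key : ∀ S : Finset (Fin d), j ∉ S →
      (∑ i ∈ insert j S, Hm μ (fun ω => Z ω i))
        - Hm μ (fun ω => mask x0 (insert j S) (Z ω)) ≤
        ∑ i ∈ S, mutInfo μ (fun ω => Z ω i)
          (fun ω => (fun k : {k : Fin d // k ≠ i} => Z ω k.1)) := by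
    intro S
    induction S using Finset.induction_on with
    | empty =>
      intro _
      rw [Finset.sum_insert (Finset.notMem_empty j), Finset.sum_empty, Finset.sum_empty,
        add_zero]
      have h1 : (insert j (∅ : Finset (Fin d))) = {j} := rfl
      rw [h1, Hm_mask_singleton x0 Z j, sub_self]
    | @insert i S' hiS' ih =>
      intro hjS
      have hj1 : j ∉ S' := fun h => hjS (Finset.mem_insert_of_mem h)
      have hji : j ≠ i := fun h => hjS (h ▸ Finset.mem_insert_self i S')
      have hiT : i ∉ insert j S' := by
        rw [Finset.mem_insert]
        push_neg
        exact ⟨fun h => hji h.symm, hiS'⟩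
      have hins : insert j (insert i S') = insert i (insert j S') :=
        Finset.insert_comm j i S'
      rw [hins, Finset.sum_insert hiT, Finset.sum_insert hiS']
      have hstep := chain_step hmu0 hmu1 x0 Z i (insert j S') hiT
      have hih := ih hj1
      linarith
  have hkey := key (Finset.univ.erase j) (Finset.notMem_erase j _)
  rw [Finset.insert_erase (Finset.mem_univ j)] at hkey
  have hMuniv : (fun ω => mask x0 Finset.univ (Z ω)) = Z := by
    funext ω k
    simp [mask]
  rw [hMuniv] at hkey
  rw [KLdiv_prod_eq hmu0]
  exact hkey
end

section
/- Let D_1,...,D_L be a sequence of integers with 1 ≤ D_t ≤ L for all t, and define the envelope sequence by D̄_1 = 0 and, for t ≥ 2, D̄_t = D̄_{t-1} if D_{t-1} < D̄_{t-1} and D̄_t = 2·D_{t-1} if D_{t-1} ≥ D̄_{t-1}. Then the number of indices t ∈ [L] for which D_t ≥ D̄_t is at most log₂(L) + 1. -/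
open Finset

open scoped Classical in
/-- The number of envelope-crossing iterations `t` with `D_t ≥ D̄_t` is at most `log₂ L + 1`. -/
theorem card_envelope_crossings_le
    (L : ℕ) (hL : 1 ≤ L) (D : ℕ → ℕ) (Dbar : ℕ → ℝ)
    (hD : ∀ t ∈ Finset.Icc 1 L, 1 ≤ D t ∧ D t ≤ L)
    (h1 : Dbar 1 = 0)
    (hrec : ∀ t, 2 ≤ t →
      Dbar t = if (D (t-1) : ℝ) < Dbar (t-1) then Dbar (t-1) else 2 * (D (t-1) : ℝ)) :
    (((Finset.Icc 1 L).filter (fun t => Dbar t ≤ (D t : ℝ))).card : ℝ) ≤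
      Real.logb 2 L + 1 := by
  classical
  have key : ∀ t, 1 ≤ t → t ≤ L →
      Dbar (t+1) ≤ 2 * L ∧
      (1 ≤ ((Finset.Icc 1 t).filter (fun s => Dbar s ≤ (D s : ℝ))).card →
        (2:ℝ) ^ ((Finset.Icc 1 t).filter (fun s => Dbar s ≤ (D s : ℝ))).card ≤ Dbar (t+1)) := by
    intro t
    induction t with
    | zero => omega
    | succ n ih =>
      intro _ hle
      have hrn : Dbar (n+2) = if (D (n+1) : ℝ) < Dbar (n+1) then Dbar (n+1) else 2 * (D (n+1) : ℝ) := by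
        have := hrec (n+2) (by omega)
        simpa using this
      have hDn := hD (n+1) (Finset.mem_Icc.mpr ⟨by omega, hle⟩)
      have hIcc : Finset.Icc 1 (n+1) = insert (n+1) (Finset.Icc 1 n) := by
        rw [← Finset.insert_Icc_right_eq_Icc_add_one (by omega)]
      have hnotmem : (n+1) ∉ Finset.Icc 1 n := by simp
      by_cases hc : Dbar (n+1) ≤ (D (n+1) : ℝ)
      · -- crossing at n+1
        have hval : Dbar (n+2) = 2 * (D (n+1) : ℝ) := by
          rw [hrn, if_neg (not_lt.mpr hc)]
        have hcard : ((Finset.Icc 1 (n+1)).filter (fun s => Dbar s ≤ (D s : ℝ))).card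
            = ((Finset.Icc 1 n).filter (fun s => Dbar s ≤ (D s : ℝ))).card + 1 := by
          rw [hIcc, Finset.filter_insert, if_pos hc,
            Finset.card_insert_of_notMem (fun h => hnotmem (Finset.mem_of_mem_filter _ h))]
        constructor
        · have : (D (n+1) : ℝ) ≤ L := by exact_mod_cast hDn.2
          linarith
        · intro _
          rw [hcard]
          rcases Nat.eq_zero_or_pos ((Finset.Icc 1 n).filter (fun s => Dbar s ≤ (D s : ℝ))).card with h0 | hpos
          · rw [h0]
            have : (1:ℝ) ≤ (D (n+1) : ℝ) := by exact_mod_cast hDn.1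
            rw [hval]; norm_num; linarith
          · have hn1 : 1 ≤ n := by
              by_contra h
              have : n = 0 := by omega
              subst this
              simp at hpos
            have hih := (ih hn1 (by omega)).2 hpos
            have : (2:ℝ) ^ ((Finset.Icc 1 n).filter (fun s => Dbar s ≤ (D s : ℝ))).card ≤ (D (n+1) : ℝ) :=
              le_trans hih hc
            rw [hval, pow_succ]
            linarith
      · -- no crossing
        have hval : Dbar (n+2) = Dbar (n+1) := by
          rw [hrn, if_pos (not_le.mp hc)]
        have hcard : ((Finset.Icc 1 (n+1)).filter (fun s => Dbar s ≤ (D s : ℝ))).card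
            = ((Finset.Icc 1 n).filter (fun s => Dbar s ≤ (D s : ℝ))).card := by
          rw [hIcc, Finset.filter_insert, if_neg hc]
        have hn1 : 1 ≤ n := by
          by_contra h
          have : n = 0 := by omega
          subst this
          exact hc (by rw [h1]; positivity)
        obtain ⟨ihA, ihB⟩ := ih hn1 (by omega)
        refine ⟨by rw [hval]; exact ihA, ?_⟩
        intro hpos
        rw [hcard] at hpos ⊢
        rw [hval]
        exact ihB hpos
  set k := ((Finset.Icc 1 L).filter (fun t => Dbar t ≤ (D t : ℝ))).card with hk
  rcases Nat.eq_zero_or_pos k with h0 | hpos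
  · rw [h0]
    have : (0:ℝ) ≤ Real.logb 2 L := Real.logb_nonneg (by norm_num) (by exact_mod_cast hL)
    push_cast
    linarith
  · obtain ⟨hA, hB⟩ := key L hL le_rfl
    have h2k : (2:ℝ) ^ k ≤ 2 * L := le_trans (hB hpos) hA
    have hLpos : (0:ℝ) < L := by exact_mod_cast hL
    have hpow : (2:ℝ) ^ ((k:ℝ) - 1) ≤ L := by
      rw [Real.rpow_sub (by norm_num), Real.rpow_natCast, Real.rpow_one]
      rw [div_le_iff₀ (by norm_num)]
      linarith
    have := (Real.le_logb_iff_rpow_le (by norm_num) hLpos).mpr hpow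
    linarith
end

section
/- Let D_1,...,D_L be integers with 1 ≤ D_t ≤ L, and D̄_t the envelope sequence defined by D̄_1 = 0, D̄_t = D̄_{t-1} if D_{t-1} < D̄_{t-1}, and D̄_t = 2 D_{t-1} if D_{t-1} ≥ D̄_{t-1}. If s_1 < s_2 < ... < s_m are the indices at which D_{s_j} ≥ D̄_{s_j}, then D_{s_j} ≥ 2^{j-1} for every j ∈ [m]. -/
open Finset

/-- Geometric growth of envelope-crossing batch sizes: along increasing crossing indices
`s₁ < s₂ < …`, one has `D_{s_j} ≥ 2^{j-1}`. -/
theorem envelope_crossing_geometric_growth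
    (L m : ℕ) (D : ℕ → ℕ) (Dbar : ℕ → ℝ)
    (hD : ∀ t ∈ Finset.Icc 1 L, 1 ≤ D t ∧ D t ≤ L)
    (h1 : Dbar 1 = 0)
    (hrec : ∀ t, 2 ≤ t →
      Dbar t = if (D (t-1) : ℝ) < Dbar (t-1) then Dbar (t-1) else 2 * (D (t-1) : ℝ))
    (s : Fin m → ℕ) (hs : StrictMono s)
    (hrange : ∀ j, s j ∈ Finset.Icc 1 L)
    (hcross : ∀ j, Dbar (s j) ≤ (D (s j) : ℝ)) :
    ∀ j : Fin m, (2 : ℝ) ^ (j : ℕ) ≤ (D (s j) : ℝ) := by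
  have nonneg : ∀ t, 1 ≤ t → 0 ≤ Dbar t := by
    intro t ht
    induction t with
    | zero => omega
    | succ n ih =>
      rcases Nat.lt_or_ge n 1 with h | h
      · interval_cases n
        · rw [h1]
      · rw [hrec (n+1) (by omega)]
        simp only [Nat.add_sub_cancel]
        split_ifs with hc
        · exact ih h
        · positivity
  have step : ∀ t, 1 ≤ t → Dbar t ≤ Dbar (t+1) := by
    intro t ht
    rw [hrec (t+1) (by omega)]
    simp only [Nat.add_sub_cancel]
    split_ifs with hc
    · exact le_refl _
    · push_neg at hc
      have : (0:ℝ) ≤ (D t : ℝ) := Nat.cast_nonneg _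
      linarith
  have mono : ∀ a b, 1 ≤ a → a ≤ b → Dbar a ≤ Dbar b := by
    intro a b ha hab
    induction b with
    | zero => omega
    | succ n ih =>
      rcases Nat.lt_or_ge n a with h | h
      · have : a = n + 1 := by omega
        rw [this]
      · exact le_trans (ih h) (step n (by omega))
  rintro ⟨v, hv⟩
  induction v with
  | zero =>
    simp only [Fin.val_mk, pow_zero]
    have := (hD _ (hrange ⟨0, hv⟩)).1
    exact_mod_cast this
  | succ k ih =>
    have hk : k < m := by omega
    have prev := ih hk
    simp only [Fin.val_mk] at prev ⊢
    set a := s ⟨k, hk⟩ with ha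
    set b := s ⟨k+1, hv⟩ with hb
    have hab : a < b := hs (by simp [Fin.lt_def])
    have ha1 : 1 ≤ a := (Finset.mem_Icc.mp (hrange ⟨k, hk⟩)).1
    have hcrossa : Dbar a ≤ (D a : ℝ) := hcross ⟨k, hk⟩
    have hDa1 : Dbar (a+1) = 2 * (D a : ℝ) := by
      rw [hrec (a+1) (by omega)]
      simp only [Nat.add_sub_cancel]
      rw [if_neg (not_lt.mpr hcrossa)]
    have h2 : Dbar (a+1) ≤ Dbar b := mono (a+1) b (by omega) (by omega)
    have h3 : Dbar b ≤ (D b : ℝ) := hcross ⟨k+1, hv⟩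
    calc (2:ℝ) ^ (k+1) = 2 * 2 ^ k := by ring
    _ ≤ 2 * (D a : ℝ) := by linarith
    _ = Dbar (a+1) := hDa1.symm
    _ ≤ (D b : ℝ) := le_trans h2 h3
end

section
/- Consider the same adaptive revelation setting: X = (X^1,...,X^L) on a finite alphabet, adaptive batches D_1,...,D_T with cumulative sets W_t, where each D_t is determined by (W_{t-1}, X^{W_{t-1}}). Let q be the distribution of the sequence generated by the sampler that, at each step t, draws the coordinates in D_t independently from their true conditional marginals given X^{W_{t-1}} (instead of their true joint conditional). Then H(X) = E[ Σ_{t=1}^T Σ_{i ∈ D_t} H(X^i | W_{t-1}, X^{W_{t-1}}) ] − KL(p_X || q), where H(X^i | W_{t-1}, X^{W_{t-1}}) is the pointwise conditional entropy of coordinate i given the realized history. -/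
open Finset

lemma myaux_sum_distOf_filter {Ω α : Type*} [Fintype Ω] [Fintype α] [DecidableEq α]
    (μ : Ω → ℝ) (X : Ω → α) (A : Finset α) :
    ∑ x ∈ A, distOf μ X x = ∑ ω ∈ univ.filter (fun ω => X ω ∈ A), μ ω := by
  unfold distOf
  exact Finset.sum_fiberwise_eq_sum_filter univ A X μ

lemma myaux_key_inner {Ω 𝕏 : Type*} [Fintype Ω] [Fintype 𝕏] [DecidableEq 𝕏] {L : ℕ}
    (μ : Ω → ℝ) (hmu0 : ∀ ω, 0 ≤ μ ω) (X : Ω → Fin L → 𝕏)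
    (Wt : Finset (Fin L)) (x0 : Fin L → 𝕏) (i : Fin L) :
    ∑ x ∈ univ.filter (fun x => restr Wt x = restr Wt x0),
      distOf μ X x * (entOf (distOf (condOn μ X Wt x0) (fun ω => X ω i))
        + Real.log (distOf (condOn μ X Wt x0) (fun ω => X ω i) (x i))) = 0 := by
  set Z : Ω → (↥Wt → 𝕏) := fun ω => restr Wt (X ω) with hZ
  set z : ↥Wt → 𝕏 := restr Wt x0 with hz
  set M : ℝ := distOf μ Z z with hM
  set F : Finset (Fin L → 𝕏) := univ.filter (fun x => restr Wt x = restr Wt x0) with hF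
  set ν : Ω → ℝ := condOn μ X Wt x0 with hν
  set r : 𝕏 → ℝ := distOf ν (fun ω => X ω i) with hr
  set E : ℝ := entOf r with hE
  have hνite : ∀ ω, ν ω = if Z ω = z then μ ω / M else 0 := fun ω => rfl
  have hmass : ∑ x ∈ F, distOf μ X x = M := by
    rw [myaux_sum_distOf_filter]
    rw [hM]
    unfold distOf
    apply Finset.sum_congr _ (fun _ _ => rfl)
    apply Finset.filter_congr
    intro ω _
    simp only [hF, Finset.mem_filter, Finset.mem_univ, true_and, hZ, hz]
  have hMzero : M = 0 → ∀ ω, Z ω = z → μ ω = 0 := by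
    intro h0 ω hω
    have : ∑ ω ∈ univ.filter (fun ω => Z ω = z), μ ω = 0 := h0 ▸ rfl
    have := (Finset.sum_eq_zero_iff_of_nonneg (fun ω _ => hmu0 ω)).mp this
    exact this ω (Finset.mem_filter.mpr ⟨Finset.mem_univ _, hω⟩)
  have hG : ∀ a : 𝕏, ∑ x ∈ F.filter (fun x => x i = a), distOf μ X x = M * r a := by
    intro a
    have h1 : ∑ x ∈ F.filter (fun x => x i = a), distOf μ X x
        = ∑ ω ∈ univ.filter (fun ω => Z ω = z ∧ X ω i = a), μ ω := by
      rw [myaux_sum_distOf_filter]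
      apply Finset.sum_congr _ (fun _ _ => rfl)
      apply Finset.filter_congr
      intro ω _
      simp only [hF, Finset.mem_filter, Finset.mem_univ, true_and, hZ, hz]
    have h2 : r a = (∑ ω ∈ univ.filter (fun ω => Z ω = z ∧ X ω i = a), μ ω) / M := by
      rw [hr]
      show ∑ ω ∈ univ.filter (fun ω => X ω i = a), ν ω = _
      calc ∑ ω ∈ univ.filter (fun ω => X ω i = a), ν ω
          = ∑ ω ∈ (univ.filter (fun ω => X ω i = a)).filter (fun ω => Z ω = z),
              μ ω / M := by
            rw [Finset.sum_filter (fun ω => Z ω = z) (fun ω => μ ω / M)]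
            exact Finset.sum_congr rfl fun ω _ => hνite ω
        _ = (∑ ω ∈ univ.filter (fun ω => Z ω = z ∧ X ω i = a), μ ω) / M := by
            rw [Finset.filter_filter, Finset.sum_div]
            apply Finset.sum_congr _ (fun _ _ => rfl)
            apply Finset.filter_congr
            intro ω _
            exact and_comm
    by_cases h0 : M = 0
    · rw [h1, h0, zero_mul]
      apply Finset.sum_eq_zero
      intro ω hω
      exact hMzero h0 ω (Finset.mem_filter.mp hω).2.1
    · rw [h1, h2, mul_div_cancel₀ _ h0]
  calc ∑ x ∈ F, distOf μ X x * (E + Real.log (r (x i)))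
      = ∑ a, ∑ x ∈ F.filter (fun x => x i = a),
          distOf μ X x * (E + Real.log (r (x i))) :=
        (Finset.sum_fiberwise F (fun x => x i) _).symm
    _ = ∑ a, ∑ x ∈ F.filter (fun x => x i = a),
          distOf μ X x * (E + Real.log (r a)) := by
        refine Finset.sum_congr rfl fun a _ => Finset.sum_congr rfl fun x hx => ?_
        rw [(Finset.mem_filter.mp hx).2]
    _ = ∑ a, ((∑ x ∈ F.filter (fun x => x i = a), distOf μ X x) * E
          + (∑ x ∈ F.filter (fun x => x i = a), distOf μ X x) * Real.log (r a)) := by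
        refine Finset.sum_congr rfl fun a _ => ?_
        rw [← mul_add, Finset.sum_mul]
    _ = (∑ a, (∑ x ∈ F.filter (fun x => x i = a), distOf μ X x) * E)
          + ∑ a, M * (r a * Real.log (r a)) := by
        rw [Finset.sum_add_distrib]
        congr 1
        refine Finset.sum_congr rfl fun a _ => ?_
        rw [hG a]; ring
    _ = M * E + M * ∑ a, r a * Real.log (r a) := by
        rw [← Finset.sum_mul, Finset.sum_fiberwise, hmass, ← Finset.mul_sum]
    _ = 0 := by
        rw [hE, hr]
        unfold entOf
        ring

/-- Entropy decomposition with the factorized sampler: `H(X)` equals the expected sum of the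
per-token pointwise conditional entropies along the trajectory minus the KL sampling error
incurred by drawing each batch's coordinates independently from their conditional marginals. -/
theorem entropy_eq_expected_sum_token_condEnt_sub_KL
    {Ω 𝕏 : Type*} [Fintype Ω] [Fintype 𝕏] [DecidableEq 𝕏] (L : ℕ)
    (μ : Ω → ℝ) (hmu0 : ∀ ω, 0 ≤ μ ω) (hmu1 : ∑ ω, μ ω = 1)
    (X : Ω → Fin L → 𝕏)
    (W : ℕ → (Fin L → 𝕏) → Finset (Fin L)) (T : (Fin L → 𝕏) → ℕ)
    (hW0 : ∀ x, W 0 x = ∅)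
    (hmono : ∀ x t, W t x ⊆ W (t+1) x)
    (hfull : ∀ x, W (T x) x = Finset.univ)
    (hadapt : ∀ t x x', W t x = W t x' → (∀ i ∈ W t x, x i = x' i) →
      W (t+1) x = W (t+1) x') :
    entOf (distOf μ X) =
      (∑ x, distOf μ X x * ∑ t ∈ Finset.range (T x),
          ∑ i ∈ W (t+1) x \ W t x,
            entOf (distOf (condOn μ X (W t x) x) (fun ω => X ω i)))
        - KLdiv (distOf μ X)
            (fun x => ∏ t ∈ Finset.range (T x), ∏ i ∈ W (t+1) x \ W t x,
              distOf (condOn μ X (W t x) x) (fun ω => X ω i) (x i)) := by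
  -- basic abbreviations (all written out explicitly)
  have hp0 : ∀ x, 0 ≤ distOf μ X x := fun x => Finset.sum_nonneg fun ω _ => hmu0 ω
  -- determinism of W from revealed values
  have hWdet : ∀ t (x x' : Fin L → 𝕏), (∀ i ∈ W t x, x i = x' i) → W t x = W t x' := by
    intro t
    induction t with
    | zero => intro x x' _; rw [hW0, hW0]
    | succ t ih =>
      intro x x' h
      have h' : ∀ i ∈ W t x, x i = x' i := fun i hi => h i (hmono x t hi)
      exact hadapt t x x' (ih x x' h') h'
  -- W saturates after time T x
  have hWfull : ∀ (x : Fin L → 𝕏) t, T x ≤ t → W t x = Finset.univ := by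
    intro x t ht
    induction t, ht using Nat.le_induction with
    | base => exact hfull x
    | succ n hn ih =>
      have h := hmono x n
      rw [ih] at h
      exact Finset.univ_subset_iff.mp h
  -- horizon
  set N : ℕ := Finset.univ.sup T with hN
  have hTN : ∀ x, T x ≤ N := fun x => Finset.le_sup (Finset.mem_univ x)
  -- positivity of the conditional marginals on the support
  have hpos : ∀ (x : Fin L → 𝕏), distOf μ X x ≠ 0 → ∀ t i,
      0 < distOf (condOn μ X (W t x) x) (fun ω => X ω i) (x i) := by
    intro x hx t i
    have hx' : ∑ ω ∈ Finset.univ.filter (fun ω => X ω = x), μ ω ≠ 0 := hx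
    obtain ⟨ω0, hmem, hne⟩ := Finset.exists_ne_zero_of_sum_ne_zero hx'
    have hXω0 : X ω0 = x := (Finset.mem_filter.mp hmem).2
    have hμpos : 0 < μ ω0 := lt_of_le_of_ne (hmu0 ω0) (Ne.symm hne)
    have hZ0 : restr (W t x) (X ω0) = restr (W t x) x := by rw [hXω0]
    have hMpos : 0 < distOf μ (fun ω => restr (W t x) (X ω)) (restr (W t x) x) := by
      have h1 : μ ω0 ≤ ∑ ω ∈ Finset.univ.filter
          (fun ω => restr (W t x) (X ω) = restr (W t x) x), μ ω :=
        Finset.single_le_sum (fun ω _ => hmu0 ω)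
          (Finset.mem_filter.mpr ⟨Finset.mem_univ _, hZ0⟩)
      exact lt_of_lt_of_le hμpos h1
    have hν0 : ∀ ω, 0 ≤ condOn μ X (W t x) x ω := by
      intro ω
      show 0 ≤ if restr (W t x) (X ω) = restr (W t x) x
        then μ ω / distOf μ (fun ω => restr (W t x) (X ω)) (restr (W t x) x) else 0
      split
      · exact div_nonneg (hmu0 ω) hMpos.le
      · exact le_refl 0
    have hν0pos : 0 < condOn μ X (W t x) x ω0 := by
      show 0 < if restr (W t x) (X ω0) = restr (W t x) x
        then μ ω0 / distOf μ (fun ω => restr (W t x) (X ω)) (restr (W t x) x) else 0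
      rw [if_pos hZ0]
      exact div_pos hμpos hMpos
    have hle : condOn μ X (W t x) x ω0
        ≤ distOf (condOn μ X (W t x) x) (fun ω => X ω i) (x i) :=
      Finset.single_le_sum (fun ω _ => hν0 ω)
        (Finset.mem_filter.mpr ⟨Finset.mem_univ _, by show X ω0 i = x i; rw [hXω0]⟩)
    exact lt_of_lt_of_le hν0pos hle
  -- positivity of q on the support
  have hqpos : ∀ (x : Fin L → 𝕏), distOf μ X x ≠ 0 →
      0 < ∏ t ∈ Finset.range (T x), ∏ i ∈ W (t+1) x \ W t x,
        distOf (condOn μ X (W t x) x) (fun ω => X ω i) (x i) :=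
    fun x hx => Finset.prod_pos fun t _ => Finset.prod_pos fun i _ => hpos x hx t i
  -- expansion of KL
  have hKL : KLdiv (distOf μ X)
      (fun x => ∏ t ∈ Finset.range (T x), ∏ i ∈ W (t+1) x \ W t x,
        distOf (condOn μ X (W t x) x) (fun ω => X ω i) (x i))
      = (∑ x, distOf μ X x * Real.log (distOf μ X x))
        - ∑ x, distOf μ X x * Real.log (∏ t ∈ Finset.range (T x), ∏ i ∈ W (t+1) x \ W t x,
            distOf (condOn μ X (W t x) x) (fun ω => X ω i) (x i)) := by
    rw [← Finset.sum_sub_distrib]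
    unfold KLdiv
    refine Finset.sum_congr rfl fun x _ => ?_
    by_cases hx : distOf μ X x = 0
    · simp [hx]
    · rw [Real.log_div hx (ne_of_gt (hqpos x hx))]
      ring
  -- log of the product as double sum of logs (on the support)
  have hlog : ∀ x, distOf μ X x * Real.log (∏ t ∈ Finset.range (T x),
        ∏ i ∈ W (t+1) x \ W t x,
          distOf (condOn μ X (W t x) x) (fun ω => X ω i) (x i))
      = distOf μ X x * ∑ t ∈ Finset.range (T x), ∑ i ∈ W (t+1) x \ W t x,
          Real.log (distOf (condOn μ X (W t x) x) (fun ω => X ω i) (x i)) := by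
    intro x
    by_cases hx : distOf μ X x = 0
    · rw [hx, zero_mul, zero_mul]
    · congr 1
      rw [Real.log_prod (fun t _ => (Finset.prod_pos fun i _ => hpos x hx t i).ne')]
      exact Finset.sum_congr rfl fun t _ =>
        Real.log_prod (fun i _ => (hpos x hx t i).ne')
  -- extension of adaptive horizon sums to a fixed horizon N
  have hext : ∀ (x : Fin L → 𝕏) (g : ℕ → Fin L → ℝ),
      (∑ t ∈ Finset.range (T x), ∑ i ∈ W (t+1) x \ W t x, g t i)
        = ∑ t ∈ Finset.range N, ∑ i ∈ W (t+1) x \ W t x, g t i := by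
    intro x g
    apply Finset.sum_subset (Finset.range_subset_range.mpr (hTN x))
    intro t _ ht
    have hTt : T x ≤ t := Nat.le_of_not_lt (fun h => ht (Finset.mem_range.mpr h))
    rw [hWfull x t hTt, hWfull x (t+1) (le_trans hTt (Nat.le_succ t))]
    simp
  -- the key (adaptive information state)
  set key : ℕ → (Fin L → 𝕏) → (Fin L → Option 𝕏) :=
    fun t x i => if i ∈ W t x then some (x i) else none with hkeydef
  have hkey : ∀ t (x x' : Fin L → 𝕏), key t x = key t x' ↔ ∀ i ∈ W t x, x i = x' i := by
    intro t x x'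
    constructor
    · intro h i hi
      have h1 := congrFun h i
      simp only [hkeydef, if_pos hi] at h1
      by_cases hi' : i ∈ W t x'
      · rw [if_pos hi'] at h1
        exact Option.some_injective _ h1
      · rw [if_neg hi'] at h1
        exact absurd h1 (by simp)
    · intro h
      have hW := hWdet t x x' h
      funext i
      by_cases hi : i ∈ W t x
      · simp only [hkeydef, if_pos hi, if_pos (hW ▸ hi), h i hi]
      · simp only [hkeydef, if_neg hi, if_neg (hW ▸ hi)]
  -- per (step t) : the combined fiber sums vanish
  have hT : ∀ t, (∑ x : Fin L → 𝕏, ∑ i ∈ W (t+1) x \ W t x,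
      distOf μ X x * (entOf (distOf (condOn μ X (W t x) x) (fun ω => X ω i))
        + Real.log (distOf (condOn μ X (W t x) x) (fun ω => X ω i) (x i)))) = 0 := by
    intro t
    rw [← Finset.sum_fiberwise Finset.univ (key t)
      (fun x => ∑ i ∈ W (t+1) x \ W t x,
        distOf μ X x * (entOf (distOf (condOn μ X (W t x) x) (fun ω => X ω i))
          + Real.log (distOf (condOn μ X (W t x) x) (fun ω => X ω i) (x i))))]
    apply Finset.sum_eq_zero
    intro k _
    rcases Finset.eq_empty_or_nonempty (Finset.univ.filter (fun x => key t x = k)) with he | hne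
    · rw [he, Finset.sum_empty]
    · obtain ⟨x0, hx0⟩ := hne
      have hx0k : key t x0 = k := (Finset.mem_filter.mp hx0).2
      have hfib : Finset.univ.filter (fun x => key t x = k)
          = Finset.univ.filter (fun x => restr (W t x0) x = restr (W t x0) x0) := by
        apply Finset.filter_congr
        intro x _
        rw [← hx0k]
        constructor
        · intro h
          have hag := (hkey t x x0).mp h
          have hWx : W t x = W t x0 := hWdet t x x0 hag
          funext j
          exact hag j.1 (by rw [hWx]; exact j.2)
        · intro h
          have hag : ∀ i ∈ W t x0, x0 i = x i := fun i hi => (congrFun h ⟨i, hi⟩).symm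
          exact ((hkey t x0 x).mpr hag).symm
      rw [hfib]
      have hsummand : ∀ x ∈ Finset.univ.filter
          (fun x => restr (W t x0) x = restr (W t x0) x0),
          (∑ i ∈ W (t+1) x \ W t x,
            distOf μ X x * (entOf (distOf (condOn μ X (W t x) x) (fun ω => X ω i))
              + Real.log (distOf (condOn μ X (W t x) x) (fun ω => X ω i) (x i))))
          = ∑ i ∈ W (t+1) x0 \ W t x0,
            distOf μ X x * (entOf (distOf (condOn μ X (W t x0) x0) (fun ω => X ω i))
              + Real.log (distOf (condOn μ X (W t x0) x0) (fun ω => X ω i) (x i))) := by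
        intro x hx
        have h := (Finset.mem_filter.mp hx).2
        have hag : ∀ i ∈ W t x0, x0 i = x i := fun i hi => (congrFun h ⟨i, hi⟩).symm
        have hW1 : W t x0 = W t x := hWdet t x0 x hag
        have hW2 : W (t+1) x0 = W (t+1) x := hadapt t x0 x hW1 hag
        have hcond : condOn μ X (W t x0) x = condOn μ X (W t x0) x0 := by
          unfold condOn
          rw [h]
        rw [← hW1, ← hW2, hcond]
      rw [Finset.sum_congr rfl hsummand, Finset.sum_comm]
      exact Finset.sum_eq_zero fun i _ => myaux_key_inner μ hmu0 X (W t x0) x0 i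
  -- the main cancellation
  have hmain : (∑ x, distOf μ X x * ∑ t ∈ Finset.range (T x),
        ∑ i ∈ W (t+1) x \ W t x,
          entOf (distOf (condOn μ X (W t x) x) (fun ω => X ω i)))
      + (∑ x, distOf μ X x * Real.log (∏ t ∈ Finset.range (T x),
          ∏ i ∈ W (t+1) x \ W t x,
            distOf (condOn μ X (W t x) x) (fun ω => X ω i) (x i))) = 0 := by
    have step1 : (∑ x, distOf μ X x * ∑ t ∈ Finset.range (T x),
          ∑ i ∈ W (t+1) x \ W t x,
            entOf (distOf (condOn μ X (W t x) x) (fun ω => X ω i)))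
        + (∑ x, distOf μ X x * Real.log (∏ t ∈ Finset.range (T x),
            ∏ i ∈ W (t+1) x \ W t x,
              distOf (condOn μ X (W t x) x) (fun ω => X ω i) (x i)))
        = ∑ x : Fin L → 𝕏, ∑ t ∈ Finset.range N, ∑ i ∈ W (t+1) x \ W t x,
            distOf μ X x * (entOf (distOf (condOn μ X (W t x) x) (fun ω => X ω i))
              + Real.log (distOf (condOn μ X (W t x) x) (fun ω => X ω i) (x i))) := by
      rw [← Finset.sum_add_distrib]
      refine Finset.sum_congr rfl fun x _ => ?_
      rw [hlog x,
        hext x (fun t i => entOf (distOf (condOn μ X (W t x) x) (fun ω => X ω i))),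
        hext x (fun t i =>
          Real.log (distOf (condOn μ X (W t x) x) (fun ω => X ω i) (x i))),
        ← mul_add, ← Finset.sum_add_distrib, Finset.mul_sum]
      refine Finset.sum_congr rfl fun t _ => ?_
      rw [← Finset.sum_add_distrib, Finset.mul_sum]
    rw [step1, Finset.sum_comm]
    exact Finset.sum_eq_zero fun t _ => hT t
  -- put everything together
  rw [hKL]
  have hent : entOf (distOf μ X) = -∑ x, distOf μ X x * Real.log (distOf μ X x) := rfl
  linarith [hmain, hent]
end

section
/- Let X = (X^1,...,X^L) be a random vector on a finite alphabet and fix i. Suppose coordinates other than i are revealed in batches D^{∖i}_1, D^{∖i}_2, ..., D^{∖i}_L (partitioning [L]\{i}) with cumulative sets W^{∖i}_k, each batch determined by the realized history. Let η > 0 and define k_0 as the smallest k ∈ [L] with H(X^i | W^{∖i}_{k-1}, X^{W^{∖i}_{k-1}}) ≤ η along the realized trajectory (pointwise conditional entropy). Then E[ Σ_{k=1}^{L} I(X^i; X^{D^{∖i}_k} | W^{∖i}_{k-1}, X^{W^{∖i}_{k-1}}) · 1{H(X^i | W^{∖i}_{k-1}, X^{W^{∖i}_{k-1}}) ≤ η}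 ] ≤ min(H(X^i), η). -/
open Finset

open scoped Classical

section Helpers

variable {Ω γ γ' : Type*} [Fintype Ω]

lemma distOf_apply [DecidableEq γ] (μ : Ω → ℝ) (Z : Ω → γ) (z : γ) :
    distOf μ Z z = ∑ ω, if Z ω = z then μ ω else 0 := by
  rw [distOf, Finset.sum_filter]

lemma distOf_nonneg' [DecidableEq γ] {μ : Ω → ℝ} (hμ : ∀ ω, 0 ≤ μ ω) (Z : Ω → γ) (z : γ) :
    0 ≤ distOf μ Z z :=
  Finset.sum_nonneg fun ω _ => hμ ω

lemma sum_distOf_mem [DecidableEq γ] (μ : Ω → ℝ) (Z : Ω → γ) (A : Finset γ) :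
    ∑ z ∈ A, distOf μ Z z = ∑ ω, if Z ω ∈ A then μ ω else 0 := by
  simp only [distOf_apply]
  rw [Finset.sum_comm]
  refine Finset.sum_congr rfl fun ω _ => ?_
  rw [Finset.sum_ite_eq A (Z ω) (fun _ => μ ω)]

lemma distOf_sum_eq [DecidableEq γ] [Fintype γ] (μ : Ω → ℝ) (Z : Ω → γ) :
    ∑ z, distOf μ Z z = ∑ ω, μ ω := by
  rw [sum_distOf_mem]; simp

lemma distOf_mono [DecidableEq γ] [DecidableEq γ'] {μ : Ω → ℝ} (hμ : ∀ ω, 0 ≤ μ ω)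
    {Z : Ω → γ} {Z' : Ω → γ'} {z : γ} {z' : γ'} (h : ∀ ω, Z ω = z → Z' ω = z') :
    distOf μ Z z ≤ distOf μ Z' z' := by
  rw [distOf, distOf]
  refine Finset.sum_le_sum_of_subset_of_nonneg ?_ fun ω _ _ => hμ ω
  intro ω hω
  simp only [mem_filter, mem_univ, true_and] at *
  exact h ω hω

lemma distOf_le_sum [DecidableEq γ] {μ : Ω → ℝ} (hμ : ∀ ω, 0 ≤ μ ω) (Z : Ω → γ) (z : γ) :
    distOf μ Z z ≤ ∑ ω, μ ω := by
  rw [distOf]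
  exact Finset.sum_le_sum_of_subset_of_nonneg (filter_subset _ _) (fun ω _ _ => hμ ω)

lemma entOf_distOf_nonneg [DecidableEq γ] [Fintype γ] {μ : Ω → ℝ} (hμ : ∀ ω, 0 ≤ μ ω)
    (h1 : ∑ ω, μ ω ≤ 1) (Z : Ω → γ) : 0 ≤ entOf (distOf μ Z) := by
  rw [entOf, neg_nonneg]
  apply Finset.sum_nonpos
  intro z _
  have h0 : 0 ≤ distOf μ Z z := distOf_nonneg' hμ Z z
  have hle : distOf μ Z z ≤ 1 := le_trans (distOf_le_sum hμ Z z) h1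
  exact mul_nonpos_of_nonneg_of_nonpos h0 (Real.log_nonpos h0 hle)

lemma pcond_nonneg [DecidableEq γ] {μ : Ω → ℝ} (hμ : ∀ ω, 0 ≤ μ ω) (Z : Ω → γ) (z : γ) (ω : Ω) :
    0 ≤ pcond μ Z z ω := by
  rw [pcond]
  split
  · exact div_nonneg (hμ ω) (distOf_nonneg' hμ Z z)
  · exact le_refl 0

lemma sum_pcond_le_one [DecidableEq γ] {μ : Ω → ℝ} (hμ : ∀ ω, 0 ≤ μ ω) (Z : Ω → γ) (z : γ) :
    ∑ ω, pcond μ Z z ω ≤ 1 := by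
  have : ∑ ω, pcond μ Z z ω = distOf μ Z z / distOf μ Z z := by
    simp only [pcond]
    rw [← Finset.sum_filter, ← Finset.sum_div, distOf]
  rw [this]
  rcases eq_or_ne (distOf μ Z z) 0 with h | h
  · simp [h]
  · rw [div_self h]

end Helpers

section Chain

variable {Ω α β : Type*} [Fintype Ω] [Fintype α] [Fintype β] [DecidableEq α] [DecidableEq β]

lemma distOf_pair_fst (μ : Ω → ℝ) (A : Ω → α) (B : Ω → β) (a : α) :
    distOf μ A a = ∑ b, distOf μ (fun ω => (A ω, B ω)) (a, b) := by
  simp only [distOf_apply]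
  rw [Finset.sum_comm]
  refine Finset.sum_congr rfl fun ω _ => ?_
  by_cases h : A ω = a
  · simp [h, Prod.ext_iff]
  · simp [h, Prod.ext_iff]

lemma distOf_pcond_eq (μ : Ω → ℝ) (A : Ω → α) (B : Ω → β) (a : α) (b : β) :
    distOf (pcond μ B b) A a
      = distOf μ (fun ω => (A ω, B ω)) (a, b) / distOf μ B b := by
  simp only [distOf_apply, pcond]
  rw [Finset.sum_div]
  refine Finset.sum_congr rfl fun ω _ => ?_
  by_cases h1 : A ω = a <;> by_cases h2 : B ω = b <;>
    simp [h1, h2, Prod.ext_iff, zero_div]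

lemma joint_le_fst {μ : Ω → ℝ} (hμ : ∀ ω, 0 ≤ μ ω) (A : Ω → α) (B : Ω → β) (a : α) (b : β) :
    distOf μ (fun ω => (A ω, B ω)) (a, b) ≤ distOf μ A a :=
  distOf_mono hμ fun _ h => (Prod.ext_iff.mp h).1

lemma joint_le_snd {μ : Ω → ℝ} (hμ : ∀ ω, 0 ≤ μ ω) (A : Ω → α) (B : Ω → β) (a : α) (b : β) :
    distOf μ (fun ω => (A ω, B ω)) (a, b) ≤ distOf μ B b :=
  distOf_mono hμ fun _ h => (Prod.ext_iff.mp h).2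

lemma mutInfo_chain (μ : Ω → ℝ) (hμ : ∀ ω, 0 ≤ μ ω) (A : Ω → α) (B : Ω → β) :
    mutInfo μ A B
      = entOf (distOf μ A)
        - ∑ b, distOf μ B b * entOf (distOf (pcond μ B b) A) := by
  have hj0 : ∀ a b, (0:ℝ) ≤ distOf μ (fun ω => (A ω, B ω)) (a, b) :=
    fun a b => distOf_nonneg' hμ _ _
  have hCE : ∀ b, distOf μ B b * entOf (distOf (pcond μ B b) A)
      = - ∑ a, distOf μ (fun ω => (A ω, B ω)) (a, b)
            * Real.log (distOf μ (fun ω => (A ω, B ω)) (a, b) / distOf μ B b) := by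
    intro b
    rw [entOf, mul_neg, neg_inj, Finset.mul_sum]
    refine Finset.sum_congr rfl fun a _ => ?_
    rw [distOf_pcond_eq]
    rcases eq_or_ne (distOf μ B b) 0 with h | h
    · have hj : distOf μ (fun ω => (A ω, B ω)) (a, b) = 0 :=
        le_antisymm (h ▸ joint_le_snd hμ A B a b) (hj0 a b)
      simp [h, hj]
    · have hc : distOf μ B b * (distOf μ (fun ω => (A ω, B ω)) (a, b) / distOf μ B b)
          = distOf μ (fun ω => (A ω, B ω)) (a, b) := by field_simp
      rw [← mul_assoc, hc]
  have hterm : ∀ a b, distOf μ (fun ω => (A ω, B ω)) (a, b)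
        * Real.log (distOf μ (fun ω => (A ω, B ω)) (a, b) / (distOf μ A a * distOf μ B b))
      = distOf μ (fun ω => (A ω, B ω)) (a, b)
          * Real.log (distOf μ (fun ω => (A ω, B ω)) (a, b) / distOf μ B b)
        - distOf μ (fun ω => (A ω, B ω)) (a, b) * Real.log (distOf μ A a) := by
    intro a b
    rcases eq_or_ne (distOf μ (fun ω => (A ω, B ω)) (a, b)) 0 with h | h
    · simp [h]
    · have hjpos : 0 < distOf μ (fun ω => (A ω, B ω)) (a, b) := (hj0 a b).lt_of_ne (Ne.symm h)
      have hA : 0 < distOf μ A a := lt_of_lt_of_le hjpos (joint_le_fst hμ A B a b)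
      have hB : 0 < distOf μ B b := lt_of_lt_of_le hjpos (joint_le_snd hμ A B a b)
      rw [Real.log_div h (mul_ne_zero hA.ne' hB.ne'), Real.log_mul hA.ne' hB.ne',
        Real.log_div h hB.ne']
      ring
  rw [mutInfo, KLdiv, entOf]
  simp only [hCE]
  rw [Fintype.sum_prod_type]
  calc ∑ a, ∑ b, distOf μ (fun ω => (A ω, B ω)) (a, b)
        * Real.log (distOf μ (fun ω => (A ω, B ω)) (a, b) / (distOf μ A a * distOf μ B b))
      = ∑ a, (∑ b, distOf μ (fun ω => (A ω, B ω)) (a, b)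
            * Real.log (distOf μ (fun ω => (A ω, B ω)) (a, b) / distOf μ B b)
          - ∑ b, distOf μ (fun ω => (A ω, B ω)) (a, b) * Real.log (distOf μ A a)) := by
        refine Finset.sum_congr rfl fun a _ => ?_
        rw [← Finset.sum_sub_distrib]
        exact Finset.sum_congr rfl fun b _ => hterm a b
    _ = ∑ a, ∑ b, distOf μ (fun ω => (A ω, B ω)) (a, b)
            * Real.log (distOf μ (fun ω => (A ω, B ω)) (a, b) / distOf μ B b)
        - ∑ a, distOf μ A a * Real.log (distOf μ A a) := by
        rw [Finset.sum_sub_distrib]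
        congr 1
        refine Finset.sum_congr rfl fun a _ => ?_
        rw [← Finset.sum_mul, ← distOf_pair_fst μ A B a]
    _ = -∑ a, distOf μ A a * Real.log (distOf μ A a)
        - ∑ b, -∑ a, distOf μ (fun ω => (A ω, B ω)) (a, b)
            * Real.log (distOf μ (fun ω => (A ω, B ω)) (a, b) / distOf μ B b) := by
        rw [Finset.sum_comm (s := (univ : Finset α))]
        rw [Finset.sum_neg_distrib]
        ring

end Chain

section Restr

variable {Ω : Type*} {L : ℕ} {𝕏 : Type*} [Fintype Ω] [Fintype 𝕏] [DecidableEq 𝕏]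

lemma restr_eq_iff {S : Finset (Fin L)} {x y : Fin L → 𝕏} :
    restr S x = restr S y ↔ ∀ j ∈ S, x j = y j := by
  constructor
  · intro h j hj
    exact congrFun h ⟨j, hj⟩
  · intro h
    funext j
    exact h j.1 j.2

lemma restr_split {S T : Finset (Fin L)} (hST : S ⊆ T) {x y : Fin L → 𝕏} :
    restr T x = restr T y ↔ (restr S x = restr S y ∧ restr (T \ S) x = restr (T \ S) y) := by
  simp only [restr_eq_iff, mem_sdiff]
  constructor
  · intro h
    exact ⟨fun j hj => h j (hST hj), fun j hj => h j hj.1⟩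
  · rintro ⟨h1, h2⟩ j hj
    by_cases hjS : j ∈ S
    · exact h1 j hjS
    · exact h2 j ⟨hj, hjS⟩

lemma condOn_congr (μ : Ω → ℝ) (X : Ω → Fin L → 𝕏) {S : Finset (Fin L)} {x x' : Fin L → 𝕏}
    (h : ∀ j ∈ S, x j = x' j) :
    condOn μ X S x = condOn μ X S x' := by
  rw [condOn, condOn, restr_eq_iff.2 h]

lemma condOn_empty (μ : Ω → ℝ) (h1 : ∑ ω, μ ω = 1) (X : Ω → Fin L → 𝕏) (x : Fin L → 𝕏) :
    condOn μ X (∅ : Finset (Fin L)) x = μ := by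
  have he : ∀ y z : (↥(∅ : Finset (Fin L)) → 𝕏), y = z := fun y z =>
    funext fun j => absurd j.2 (Finset.notMem_empty _)
  funext ω
  rw [condOn, pcond, if_pos (he _ _), distOf_apply]
  have : ∀ ω' : Ω, (if restr (∅ : Finset (Fin L)) (X ω') = restr ∅ x then μ ω' else 0) = μ ω' :=
    fun ω' => if_pos (he _ _)
  rw [Finset.sum_congr rfl fun ω' _ => this ω', h1, div_one]

lemma distOf_restr_sdiff (μ : Ω → ℝ) (X : Ω → Fin L → 𝕏)
    {S T : Finset (Fin L)} (hST : S ⊆ T) (x : Fin L → 𝕏) :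
    distOf (condOn μ X S x) (fun ω => restr (T \ S) (X ω)) (restr (T \ S) x)
      = distOf μ (fun ω => restr T (X ω)) (restr T x)
        / distOf μ (fun ω => restr S (X ω)) (restr S x) := by
  simp only [distOf_apply, condOn, pcond]
  rw [Finset.sum_div]
  refine Finset.sum_congr rfl fun ω _ => ?_
  by_cases h1 : restr S (X ω) = restr S x <;> by_cases h2 : restr (T \ S) (X ω) = restr (T \ S) x <;>
    simp [restr_split hST, h1, h2, zero_div]

lemma distOf_restr_le (μ : Ω → ℝ) (hμ : ∀ ω, 0 ≤ μ ω) (X : Ω → Fin L → 𝕏)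
    {S T : Finset (Fin L)} (hST : S ⊆ T) (x : Fin L → 𝕏) :
    distOf μ (fun ω => restr T (X ω)) (restr T x)
      ≤ distOf μ (fun ω => restr S (X ω)) (restr S x) :=
  distOf_mono hμ fun ω h => ((restr_split hST).1 h).1

lemma distOf_restr_mul (μ : Ω → ℝ) (hμ : ∀ ω, 0 ≤ μ ω) (X : Ω → Fin L → 𝕏)
    {S T : Finset (Fin L)} (hST : S ⊆ T) (x : Fin L → 𝕏) :
    distOf μ (fun ω => restr T (X ω)) (restr T x)
      = distOf μ (fun ω => restr S (X ω)) (restr S x)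
        * distOf (condOn μ X S x) (fun ω => restr (T \ S) (X ω)) (restr (T \ S) x) := by
  rw [distOf_restr_sdiff μ X hST x]
  rcases eq_or_ne (distOf μ (fun ω => restr S (X ω)) (restr S x)) 0 with h | h
  · have hT0 : distOf μ (fun ω => restr T (X ω)) (restr T x) = 0 :=
      le_antisymm (h ▸ distOf_restr_le μ hμ X hST x)
        (distOf_nonneg' hμ _ _)
    simp [h, hT0]
  · rw [mul_comm, div_mul_cancel₀ _ h]

lemma pcond_condOn (μ : Ω → ℝ) (hμ : ∀ ω, 0 ≤ μ ω) (X : Ω → Fin L → 𝕏)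
    {S T : Finset (Fin L)} (hST : S ⊆ T) (x : Fin L → 𝕏) :
    pcond (condOn μ X S x) (fun ω => restr (T \ S) (X ω)) (restr (T \ S) x)
      = condOn μ X T x := by
  funext ω
  rw [pcond, distOf_restr_sdiff μ X hST x]
  simp only [condOn, pcond]
  by_cases h2 : restr (T \ S) (X ω) = restr (T \ S) x
  · rw [if_pos h2]
    by_cases h1 : restr S (X ω) = restr S x
    · rw [if_pos h1, if_pos ((restr_split hST).2 ⟨h1, h2⟩)]
      rcases eq_or_ne (distOf μ (fun ω => restr S (X ω)) (restr S x)) 0 with h | h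
      · have hT0 : distOf μ (fun ω => restr T (X ω)) (restr T x) = 0 :=
          le_antisymm (h ▸ distOf_restr_le μ hμ X hST x) (distOf_nonneg' hμ _ _)
        simp [h, hT0]
      · rcases eq_or_ne (distOf μ (fun ω => restr T (X ω)) (restr T x)) 0 with h' | h'
        · simp [h']
        · field_simp
    · rw [if_neg h1, if_neg (fun hc => h1 ((restr_split hST).1 hc).1), zero_div]
  · rw [if_neg h2, if_neg (fun hc => h2 ((restr_split hST).1 hc).2)]

lemma condOn_nonneg {μ : Ω → ℝ} (hμ : ∀ ω, 0 ≤ μ ω) (X : Ω → Fin L → 𝕏)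
    (S : Finset (Fin L)) (x : Fin L → 𝕏) (ω : Ω) : 0 ≤ condOn μ X S x ω :=
  pcond_nonneg hμ _ _ ω

lemma sum_condOn_le_one {μ : Ω → ℝ} (hμ : ∀ ω, 0 ≤ μ ω) (X : Ω → Fin L → 𝕏)
    (S : Finset (Fin L)) (x : Fin L → 𝕏) : ∑ ω, condOn μ X S x ω ≤ 1 :=
  sum_pcond_le_one hμ _ _

end Restr

section ClaimE

variable {Ω 𝕏 : Type*} [Fintype Ω] [Fintype 𝕏] [DecidableEq 𝕏] {L : ℕ}

lemma sum_distOf_agree (μ : Ω → ℝ) (X : Ω → Fin L → 𝕏) (S : Finset (Fin L)) (y : Fin L → 𝕏)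
    (A : Finset (Fin L → 𝕏)) (hA : ∀ x, x ∈ A ↔ restr S x = restr S y) :
    ∑ x ∈ A, distOf μ X x = distOf μ (fun ω => restr S (X ω)) (restr S y) := by
  rw [sum_distOf_mem, distOf_apply]
  exact Finset.sum_congr rfl fun ω _ => if_congr (hA (X ω)) rfl rfl

lemma claimE (μ : Ω → ℝ) (hmu0 : ∀ ω, 0 ≤ μ ω)
    (X : Ω → Fin L → 𝕏) (i : Fin L) (η : ℝ)
    (W : ℕ → (Fin L → 𝕏) → Finset (Fin L)) (k : ℕ)
    (hST : ∀ x, W k x ⊆ W (k+1) x)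
    (histW : ∀ x x', (∀ j ∈ W k x, x j = x' j) → W k x' = W k x ∧ W (k+1) x' = W (k+1) x) :
    ∑ x, distOf μ X x * (if entOf (distOf (condOn μ X (W k x) x) (fun ω => X ω i)) ≤ η then
        (∑ b : (↥(W (k+1) x \ W k x) → 𝕏),
          distOf (condOn μ X (W k x) x) (fun ω => restr (W (k+1) x \ W k x) (X ω)) b
            * entOf (distOf (pcond (condOn μ X (W k x) x)
                (fun ω => restr (W (k+1) x \ W k x) (X ω)) b) (fun ω => X ω i))) else 0)
    = ∑ x, distOf μ X x * (if entOf (distOf (condOn μ X (W k x) x) (fun ω => X ω i)) ≤ η then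
        entOf (distOf (condOn μ X (W (k+1) x) x) (fun ω => X ω i)) else 0) := by
  classical
  set κ : (Fin L → 𝕏) → (Fin L → Option 𝕏) :=
    fun x j => if j ∈ W k x then some (x j) else none with hκ
  have hdec : ∀ f : (Fin L → 𝕏) → ℝ,
      ∑ z : Fin L → Option 𝕏, ∑ x ∈ univ.filter (fun x => κ x = z), f x = ∑ x, f x :=
    fun f => Finset.sum_fiberwise_of_maps_to (fun x _ => Finset.mem_univ _) f
  rw [← hdec (fun x => distOf μ X x *
      (if entOf (distOf (condOn μ X (W k x) x) (fun ω => X ω i)) ≤ η then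
        (∑ b : (↥(W (k+1) x \ W k x) → 𝕏),
          distOf (condOn μ X (W k x) x) (fun ω => restr (W (k+1) x \ W k x) (X ω)) b
            * entOf (distOf (pcond (condOn μ X (W k x) x)
                (fun ω => restr (W (k+1) x \ W k x) (X ω)) b) (fun ω => X ω i))) else 0)),
    ← hdec (fun x => distOf μ X x *
      (if entOf (distOf (condOn μ X (W k x) x) (fun ω => X ω i)) ≤ η then
        entOf (distOf (condOn μ X (W (k+1) x) x) (fun ω => X ω i)) else 0))]
  refine Finset.sum_congr rfl fun z _ => ?_
  rcases Finset.eq_empty_or_nonempty (univ.filter (fun x => κ x = z)) with hz | ⟨xb, hxb⟩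
  · rw [hz, Finset.sum_empty, Finset.sum_empty]
  have hzxb : κ xb = z := (Finset.mem_filter.mp hxb).2
  have hmemF : ∀ x : Fin L → 𝕏, (κ x = z ↔ ∀ j ∈ W k xb, x j = xb j) := by
    intro x
    rw [← hzxb]
    constructor
    · intro hx j hj
      have hxj := congrFun hx j
      simp only [hκ] at hxj
      by_cases hjx : j ∈ W k x
      · rw [if_pos hjx, if_pos hj] at hxj
        exact Option.some_inj.mp hxj
      · rw [if_neg hjx, if_pos hj] at hxj
        exact absurd hxj (by simp)
    · intro hag
      have hW : W k x = W k xb := (histW xb x (fun j hj => (hag j hj).symm)).1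
      funext j
      simp only [hκ, hW]
      by_cases hj : j ∈ W k xb
      · rw [if_pos hj, if_pos hj, hag j hj]
      · rw [if_neg hj, if_neg hj]
  have hWeq : ∀ x, κ x = z → W k x = W k xb ∧ W (k+1) x = W (k+1) xb := fun x hx =>
    histW xb x (fun j hj => ((hmemF x).mp hx j hj).symm)
  have hνeq : ∀ x, κ x = z → condOn μ X (W k x) x = condOn μ X (W k xb) xb := by
    intro x hx
    rw [(hWeq x hx).1]
    exact condOn_congr μ X ((hmemF x).mp hx)
  have hCEeq : ∀ x, κ x = z →
      (∑ b : (↥(W (k+1) x \ W k x) → 𝕏),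
          distOf (condOn μ X (W k x) x) (fun ω => restr (W (k+1) x \ W k x) (X ω)) b
            * entOf (distOf (pcond (condOn μ X (W k x) x)
                (fun ω => restr (W (k+1) x \ W k x) (X ω)) b) (fun ω => X ω i)))
      = (∑ b : (↥(W (k+1) xb \ W k xb) → 𝕏),
          distOf (condOn μ X (W k xb) xb) (fun ω => restr (W (k+1) xb \ W k xb) (X ω)) b
            * entOf (distOf (pcond (condOn μ X (W k xb) xb)
                (fun ω => restr (W (k+1) xb \ W k xb) (X ω)) b) (fun ω => X ω i))) := by
    intro x hx
    rw [hνeq x hx, (hWeq x hx).2, (hWeq x hx).1]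
  by_cases hc : entOf (distOf (condOn μ X (W k xb) xb) (fun ω => X ω i)) ≤ η
  · -- positive branch
    have hST' : W k xb ⊆ W (k+1) xb := hST xb
    set ext : ((↥(W (k+1) xb \ W k xb) → 𝕏)) → (Fin L → 𝕏) :=
      fun b j => if hj : j ∈ W (k+1) xb \ W k xb then b ⟨j, hj⟩ else xb j with hext
    have hextS : ∀ b, ∀ j ∈ W k xb, ext b j = xb j := by
      intro b j hj
      simp only [hext]
      rw [dif_neg (fun hc' => (Finset.mem_sdiff.mp hc').2 hj)]
    have hextD : ∀ b : ↥(W (k+1) xb \ W k xb) → 𝕏, restr (W (k+1) xb \ W k xb) (ext b) = b := by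
      intro b
      funext jj
      simp only [restr, hext]
      rw [dif_pos jj.2]
    have hmassF : ∑ x ∈ univ.filter (fun x => κ x = z), distOf μ X x
        = distOf μ (fun ω => restr (W k xb) (X ω)) (restr (W k xb) xb) := by
      apply sum_distOf_agree μ X (W k xb) xb
      intro x
      simp only [Finset.mem_filter, Finset.mem_univ, true_and]
      exact (hmemF x).trans restr_eq_iff.symm
    have hmass : ∀ b : ↥(W (k+1) xb \ W k xb) → 𝕏,
        ∑ x ∈ univ.filter (fun x => κ x = z ∧ restr (W (k+1) xb \ W k xb) x = b), distOf μ X x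
          = distOf μ (fun ω => restr (W (k+1) xb) (X ω)) (restr (W (k+1) xb) (ext b)) := by
      intro b
      apply sum_distOf_agree μ X (W (k+1) xb) (ext b)
      intro x
      simp only [Finset.mem_filter, Finset.mem_univ, true_and]
      constructor
      · rintro ⟨h1, h2⟩
        rw [restr_split hST']
        constructor
        · rw [restr_eq_iff]
          intro j hj
          exact ((hmemF x).mp h1 j hj).trans (hextS b j hj).symm
        · rw [hextD b]
          exact h2
      · intro hT
        obtain ⟨h1, h2⟩ := (restr_split hST').mp hT
        have hag : ∀ j ∈ W k xb, x j = xb j := fun j hj =>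
          (restr_eq_iff.mp h1 j hj).trans (hextS b j hj)
        refine ⟨(hmemF x).mpr hag, ?_⟩
        rw [h2]
        exact hextD b
    have hRfib : ∑ x ∈ univ.filter (fun x => κ x = z),
          distOf μ X x * (if entOf (distOf (condOn μ X (W k x) x) (fun ω => X ω i)) ≤ η then
            entOf (distOf (condOn μ X (W (k+1) x) x) (fun ω => X ω i)) else 0)
        = ∑ b : ↥(W (k+1) xb \ W k xb) → 𝕏,
            distOf μ (fun ω => restr (W (k+1) xb) (X ω)) (restr (W (k+1) xb) (ext b))
              * entOf (distOf (condOn μ X (W (k+1) xb) (ext b)) (fun ω => X ω i)) := by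
      rw [← Finset.sum_fiberwise_of_maps_to
          (g := fun x => restr (W (k+1) xb \ W k xb) x)
          (t := (univ : Finset (↥(W (k+1) xb \ W k xb) → 𝕏)))
          (fun x _ => Finset.mem_univ _)]
      refine Finset.sum_congr rfl fun b _ => ?_
      rw [Finset.filter_filter]
      have hconst : ∀ x ∈ univ.filter (fun x => κ x = z ∧ restr (W (k+1) xb \ W k xb) x = b),
          distOf μ X x * (if entOf (distOf (condOn μ X (W k x) x) (fun ω => X ω i)) ≤ η then
            entOf (distOf (condOn μ X (W (k+1) x) x) (fun ω => X ω i)) else 0)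
            = distOf μ X x * entOf (distOf (condOn μ X (W (k+1) xb) (ext b)) (fun ω => X ω i)) := by
        intro x hx
        obtain ⟨h1, h2⟩ := (Finset.mem_filter.mp hx).2
        have hagT : ∀ j ∈ W (k+1) xb, x j = ext b j := by
          intro j hj
          by_cases hjS : j ∈ W k xb
          · exact ((hmemF x).mp h1 j hjS).trans (hextS b j hjS).symm
          · have hjD : j ∈ W (k+1) xb \ W k xb := Finset.mem_sdiff.mpr ⟨hj, hjS⟩
            have hx2 := congrFun h2 ⟨j, hjD⟩
            simp only [restr] at hx2
            simp only [hext]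
            rw [dif_pos hjD]
            exact hx2
        rw [hνeq x h1, if_pos hc, (hWeq x h1).2, condOn_congr μ X hagT]
      rw [Finset.sum_congr rfl hconst, ← Finset.sum_mul, hmass b]
    have hLfib : ∑ x ∈ univ.filter (fun x => κ x = z),
          distOf μ X x * (if entOf (distOf (condOn μ X (W k x) x) (fun ω => X ω i)) ≤ η then
            (∑ b : (↥(W (k+1) x \ W k x) → 𝕏),
              distOf (condOn μ X (W k x) x) (fun ω => restr (W (k+1) x \ W k x) (X ω)) b
                * entOf (distOf (pcond (condOn μ X (W k x) x)
                    (fun ω => restr (W (k+1) x \ W k x) (X ω)) b) (fun ω => X ω i))) else 0)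
        = ∑ b : ↥(W (k+1) xb \ W k xb) → 𝕏,
            distOf μ (fun ω => restr (W (k+1) xb) (X ω)) (restr (W (k+1) xb) (ext b))
              * entOf (distOf (condOn μ X (W (k+1) xb) (ext b)) (fun ω => X ω i)) := by
      have hconst : ∀ x ∈ univ.filter (fun x => κ x = z),
          distOf μ X x * (if entOf (distOf (condOn μ X (W k x) x) (fun ω => X ω i)) ≤ η then
            (∑ b : (↥(W (k+1) x \ W k x) → 𝕏),
              distOf (condOn μ X (W k x) x) (fun ω => restr (W (k+1) x \ W k x) (X ω)) b
                * entOf (distOf (pcond (condOn μ X (W k x) x)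
                    (fun ω => restr (W (k+1) x \ W k x) (X ω)) b) (fun ω => X ω i))) else 0)
            = distOf μ X x * (∑ b : (↥(W (k+1) xb \ W k xb) → 𝕏),
              distOf (condOn μ X (W k xb) xb) (fun ω => restr (W (k+1) xb \ W k xb) (X ω)) b
                * entOf (distOf (pcond (condOn μ X (W k xb) xb)
                    (fun ω => restr (W (k+1) xb \ W k xb) (X ω)) b) (fun ω => X ω i))) := by
        intro x hx
        have h1 := (Finset.mem_filter.mp hx).2
        rw [hCEeq x h1, hνeq x h1, if_pos hc]
      rw [Finset.sum_congr rfl hconst, ← Finset.sum_mul, hmassF, Finset.mul_sum]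
      refine Finset.sum_congr rfl fun b _ => ?_
      have e1 : condOn μ X (W k xb) (ext b) = condOn μ X (W k xb) xb :=
        condOn_congr μ X (hextS b)
      have e2 : restr (W k xb) (ext b) = restr (W k xb) xb := restr_eq_iff.2 (hextS b)
      have e3 : pcond (condOn μ X (W k xb) xb) (fun ω => restr (W (k+1) xb \ W k xb) (X ω)) b
          = condOn μ X (W (k+1) xb) (ext b) := by
        have h := pcond_condOn μ hmu0 X hST' (ext b)
        rw [e1, hextD b] at h
        exact h
      have e4 : distOf μ (fun ω => restr (W (k+1) xb) (X ω)) (restr (W (k+1) xb) (ext b))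
          = distOf μ (fun ω => restr (W k xb) (X ω)) (restr (W k xb) xb)
            * distOf (condOn μ X (W k xb) xb)
                (fun ω => restr (W (k+1) xb \ W k xb) (X ω)) b := by
        have h := distOf_restr_mul μ hmu0 X hST' (ext b)
        rw [e1, e2, hextD b] at h
        exact h
      rw [e3, e4, mul_assoc]
    rw [hLfib, hRfib]
  · -- negative branch
    have hzL : ∀ x ∈ univ.filter (fun x => κ x = z),
        distOf μ X x * (if entOf (distOf (condOn μ X (W k x) x) (fun ω => X ω i)) ≤ η then
            (∑ b : (↥(W (k+1) x \ W k x) → 𝕏),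
              distOf (condOn μ X (W k x) x) (fun ω => restr (W (k+1) x \ W k x) (X ω)) b
                * entOf (distOf (pcond (condOn μ X (W k x) x)
                    (fun ω => restr (W (k+1) x \ W k x) (X ω)) b) (fun ω => X ω i))) else 0) = 0 := by
      intro x hx
      rw [hνeq x (Finset.mem_filter.mp hx).2, if_neg hc, mul_zero]
    have hzR : ∀ x ∈ univ.filter (fun x => κ x = z),
        distOf μ X x * (if entOf (distOf (condOn μ X (W k x) x) (fun ω => X ω i)) ≤ η then
            entOf (distOf (condOn μ X (W (k+1) x) x) (fun ω => X ω i)) else 0) = 0 := by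
      intro x hx
      rw [hνeq x (Finset.mem_filter.mp hx).2, if_neg hc, mul_zero]
    rw [Finset.sum_eq_zero hzL, Finset.sum_eq_zero hzR]

end ClaimE


open scoped Classical in
/-- Auxiliary-process mutual-information bound: the expected sum, over the auxiliary batches
revealing all coordinates except `i`, of the pointwise mutual information between `X^i` and the
batch — counted only when the pointwise conditional entropy of `X^i` is at most `η` — is
bounded by `min(H(X^i), η)`. -/
theorem expected_sum_mutInfo_le_min_ent_eta
    {Ω 𝕏 : Type*} [Fintype Ω] [Fintype 𝕏] [DecidableEq 𝕏] (L : ℕ)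
    (μ : Ω → ℝ) (hmu0 : ∀ ω, 0 ≤ μ ω) (hmu1 : ∑ ω, μ ω = 1)
    (X : Ω → Fin L → 𝕏) (i : Fin L) (η : ℝ) (hη : 0 < η)
    (W : ℕ → (Fin L → 𝕏) → Finset (Fin L))
    (hW0 : ∀ x, W 0 x = ∅)
    (hmono : ∀ x k, W k x ⊆ W (k+1) x)
    (hfull : ∀ x, W L x = Finset.univ.erase i)
    (hnoti : ∀ x k, i ∉ W k x)
    (hadapt : ∀ k x x', W k x = W k x' → (∀ j ∈ W k x, x j = x' j) →
      W (k+1) x = W (k+1) x') :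
    ∑ x, distOf μ X x * ∑ k ∈ Finset.range L,
        (if entOf (distOf (condOn μ X (W k x) x) (fun ω => X ω i)) ≤ η then
          mutInfo (condOn μ X (W k x) x) (fun ω => X ω i)
            (fun ω => restr (W (k+1) x \ W k x) (X ω))
        else 0)
      ≤ min (entOf (distOf μ (fun ω => X ω i))) η := by
    classical
  have hPnn : ∀ x : Fin L → 𝕏, 0 ≤ distOf μ X x := fun x => distOf_nonneg' hmu0 X x
  have hsub : ∀ (x : Fin L → 𝕏) (m n : ℕ), m ≤ n → W m x ⊆ W n x := by
    intro x m n hmn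
    induction n, hmn using Nat.le_induction with
    | base => exact subset_rfl
    | succ n _ ih => exact ih.trans (hmono x n)
  have histW : ∀ (k : ℕ) (x x' : Fin L → 𝕏), (∀ j ∈ W k x, x j = x' j) →
      ∀ m, m ≤ k + 1 → W m x' = W m x := by
    intro k x x' hag m
    induction m with
    | zero => intro _; rw [hW0, hW0]
    | succ n ih =>
      intro hm
      have hn : n ≤ k := Nat.succ_le_succ_iff.mp hm
      have h1 : W n x' = W n x := ih (hn.trans (Nat.le_succ k))
      exact (hadapt n x x' h1.symm (fun j hj => hag j (hsub x n k hn hj))).symm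
  have histW2 : ∀ (k : ℕ) (x x' : Fin L → 𝕏), (∀ j ∈ W k x, x j = x' j) →
      W k x' = W k x ∧ W (k+1) x' = W (k+1) x := fun k x x' hag =>
    ⟨histW k x x' hag k (Nat.le_succ k), histW k x x' hag (k+1) le_rfl⟩
  have hcnn : ∀ (S : Finset (Fin L)) (x : Fin L → 𝕏) (ω : Ω), 0 ≤ condOn μ X S x ω :=
    fun S x ω => condOn_nonneg hmu0 X S x ω
  have hcle : ∀ (S : Finset (Fin L)) (x : Fin L → 𝕏), ∑ ω, condOn μ X S x ω ≤ 1 :=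
    fun S x => sum_condOn_le_one hmu0 X S x
  have hhnn : ∀ (m : ℕ) (x : Fin L → 𝕏),
      0 ≤ entOf (distOf (condOn μ X (W m x) x) (fun ω => X ω i)) :=
    fun m x => entOf_distOf_nonneg (hcnn _ _) (hcle _ _) _
  have key : ∀ k, ∑ x, distOf μ X x *
      (if entOf (distOf (condOn μ X (W k x) x) (fun ω => X ω i)) ≤ η then
        mutInfo (condOn μ X (W k x) x) (fun ω => X ω i)
          (fun ω => restr (W (k+1) x \ W k x) (X ω)) else 0)
      ≤ ∑ x, distOf μ X x *
        (min (entOf (distOf (condOn μ X (W k x) x) (fun ω => X ω i))) η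
          - min (entOf (distOf (condOn μ X (W (k+1) x) x) (fun ω => X ω i))) η) := by
    intro k
    have hchain : ∀ x : Fin L → 𝕏,
        mutInfo (condOn μ X (W k x) x) (fun ω => X ω i)
          (fun ω => restr (W (k+1) x \ W k x) (X ω))
        = entOf (distOf (condOn μ X (W k x) x) (fun ω => X ω i))
          - (∑ b : (↥(W (k+1) x \ W k x) → 𝕏),
              distOf (condOn μ X (W k x) x) (fun ω => restr (W (k+1) x \ W k x) (X ω)) b
                * entOf (distOf (pcond (condOn μ X (W k x) x)
                    (fun ω => restr (W (k+1) x \ W k x) (X ω)) b) (fun ω => X ω i))) :=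
      fun x => mutInfo_chain _ (hcnn (W k x) x) _ _
    have hE := claimE μ hmu0 X i η W k (fun x => hmono x k) (histW2 k)
    calc ∑ x, distOf μ X x *
          (if entOf (distOf (condOn μ X (W k x) x) (fun ω => X ω i)) ≤ η then
            mutInfo (condOn μ X (W k x) x) (fun ω => X ω i)
              (fun ω => restr (W (k+1) x \ W k x) (X ω)) else 0)
        = ∑ x, (distOf μ X x *
            (if entOf (distOf (condOn μ X (W k x) x) (fun ω => X ω i)) ≤ η then
              entOf (distOf (condOn μ X (W k x) x) (fun ω => X ω i)) else 0)
          - distOf μ X x *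
            (if entOf (distOf (condOn μ X (W k x) x) (fun ω => X ω i)) ≤ η then
              (∑ b : (↥(W (k+1) x \ W k x) → 𝕏),
                distOf (condOn μ X (W k x) x) (fun ω => restr (W (k+1) x \ W k x) (X ω)) b
                  * entOf (distOf (pcond (condOn μ X (W k x) x)
                      (fun ω => restr (W (k+1) x \ W k x) (X ω)) b) (fun ω => X ω i))) else 0)) := by
          refine Finset.sum_congr rfl fun x _ => ?_
          by_cases hc : entOf (distOf (condOn μ X (W k x) x) (fun ω => X ω i)) ≤ η
          · rw [if_pos hc, if_pos hc, if_pos hc, hchain x, mul_sub]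
          · rw [if_neg hc, if_neg hc, if_neg hc]
            simp
      _ = ∑ x, distOf μ X x *
            (if entOf (distOf (condOn μ X (W k x) x) (fun ω => X ω i)) ≤ η then
              entOf (distOf (condOn μ X (W k x) x) (fun ω => X ω i)) else 0)
          - ∑ x, distOf μ X x *
            (if entOf (distOf (condOn μ X (W k x) x) (fun ω => X ω i)) ≤ η then
              (∑ b : (↥(W (k+1) x \ W k x) → 𝕏),
                distOf (condOn μ X (W k x) x) (fun ω => restr (W (k+1) x \ W k x) (X ω)) b
                  * entOf (distOf (pcond (condOn μ X (W k x) x)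
                      (fun ω => restr (W (k+1) x \ W k x) (X ω)) b) (fun ω => X ω i))) else 0) :=
          Finset.sum_sub_distrib _ _
      _ = ∑ x, distOf μ X x *
            (if entOf (distOf (condOn μ X (W k x) x) (fun ω => X ω i)) ≤ η then
              entOf (distOf (condOn μ X (W k x) x) (fun ω => X ω i)) else 0)
          - ∑ x, distOf μ X x *
            (if entOf (distOf (condOn μ X (W k x) x) (fun ω => X ω i)) ≤ η then
              entOf (distOf (condOn μ X (W (k+1) x) x) (fun ω => X ω i)) else 0) := by
          rw [hE]
      _ = ∑ x, distOf μ X x *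
            ((if entOf (distOf (condOn μ X (W k x) x) (fun ω => X ω i)) ≤ η then
              entOf (distOf (condOn μ X (W k x) x) (fun ω => X ω i)) else 0)
            - (if entOf (distOf (condOn μ X (W k x) x) (fun ω => X ω i)) ≤ η then
              entOf (distOf (condOn μ X (W (k+1) x) x) (fun ω => X ω i)) else 0)) := by
          rw [← Finset.sum_sub_distrib]
          exact Finset.sum_congr rfl fun x _ => (mul_sub _ _ _).symm
      _ ≤ ∑ x, distOf μ X x *
          (min (entOf (distOf (condOn μ X (W k x) x) (fun ω => X ω i))) η
            - min (entOf (distOf (condOn μ X (W (k+1) x) x) (fun ω => X ω i))) η) := by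
          refine Finset.sum_le_sum fun x _ => mul_le_mul_of_nonneg_left ?_ (hPnn x)
          by_cases hc : entOf (distOf (condOn μ X (W k x) x) (fun ω => X ω i)) ≤ η
          · rw [if_pos hc, if_pos hc, min_eq_left hc]
            exact sub_le_sub_left (min_le_left _ _) _
          · rw [if_neg hc, if_neg hc, min_eq_right (le_of_not_ge hc), sub_self]
            exact sub_nonneg.mpr (min_le_right _ _)
  simp only [Finset.mul_sum]
  rw [Finset.sum_comm]
  calc ∑ k ∈ Finset.range L, ∑ x, distOf μ X x *
          (if entOf (distOf (condOn μ X (W k x) x) (fun ω => X ω i)) ≤ η then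
            mutInfo (condOn μ X (W k x) x) (fun ω => X ω i)
              (fun ω => restr (W (k+1) x \ W k x) (X ω)) else 0)
      ≤ ∑ k ∈ Finset.range L, ∑ x, distOf μ X x *
          (min (entOf (distOf (condOn μ X (W k x) x) (fun ω => X ω i))) η
            - min (entOf (distOf (condOn μ X (W (k+1) x) x) (fun ω => X ω i))) η) :=
        Finset.sum_le_sum fun k _ => key k
    _ = ∑ x, ∑ k ∈ Finset.range L, distOf μ X x *
          (min (entOf (distOf (condOn μ X (W k x) x) (fun ω => X ω i))) η
            - min (entOf (distOf (condOn μ X (W (k+1) x) x) (fun ω => X ω i))) η) :=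
        Finset.sum_comm
    _ = ∑ x, distOf μ X x *
          (min (entOf (distOf (condOn μ X (W 0 x) x) (fun ω => X ω i))) η
            - min (entOf (distOf (condOn μ X (W L x) x) (fun ω => X ω i))) η) := by
        refine Finset.sum_congr rfl fun x _ => ?_
        rw [← Finset.mul_sum, Finset.sum_range_sub'
          (f := fun m => min (entOf (distOf (condOn μ X (W m x) x) (fun ω => X ω i))) η)]
    _ ≤ ∑ x, distOf μ X x * min (entOf (distOf μ (fun ω => X ω i))) η := by
        refine Finset.sum_le_sum fun x _ => mul_le_mul_of_nonneg_left ?_ (hPnn x)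
        have h0 : condOn μ X (W 0 x) x = μ := by
          rw [hW0 x]
          exact condOn_empty μ hmu1 X x
        rw [h0]
        exact sub_le_self _ (le_min (hhnn L x) hη.le)
    _ = min (entOf (distOf μ (fun ω => X ω i))) η := by
        rw [← Finset.sum_mul, distOf_sum_eq μ X, hmu1, one_mul]
end

section
/- Let D_1,...,D_L be integers with 1 ≤ D_t ≤ L and envelope D̄_t defined by D̄_1 = 0, D̄_t = D̄_{t-1} if D_{t-1} < D̄_{t-1}, else D̄_t = 2 D_{t-1}. Fix k ∈ [L] and an integer q with 1 ≤ q ≤ D_k, and let s = max{ u ≤ k : D̄_u ≤ q } (well-defined since D̄_1 = 0). Then q ≤ 2 D_s, and if additionally D'_s(q) ≥ q for some quantity D'_s(q) (the batch size when an extra token is inserted at relative position q), then D'_s(q) ≥ D̄_s. -/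
open Finset

/-- Core combinatorial step of the summation-swapping lemma: with
`s = max {u ≤ k : D̄_u ≤ q}`, one has `q ≤ 2 D_s`; moreover any batch size `D'` with
`D' ≥ q` satisfies `D' ≥ D̄_s`. -/
theorem envelope_selection_bound
    (L : ℕ) (D : ℕ → ℕ) (Dbar : ℕ → ℝ)
    (hD : ∀ t ∈ Finset.Icc 1 L, 1 ≤ D t ∧ D t ≤ L)
    (h1 : Dbar 1 = 0)
    (hrec : ∀ t, 2 ≤ t →
      Dbar t = if (D (t-1) : ℝ) < Dbar (t-1) then Dbar (t-1) else 2 * (D (t-1) : ℝ))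
    (k : ℕ) (hk : k ∈ Finset.Icc 1 L)
    (q : ℕ) (hq1 : 1 ≤ q) (hqD : q ≤ D k)
    (s : ℕ) (hs1 : 1 ≤ s) (hsk : s ≤ k)
    (hsle : Dbar s ≤ (q : ℝ))
    (hsmax : ∀ u, s < u → u ≤ k → (q : ℝ) < Dbar u) :
    (q : ℝ) ≤ 2 * (D s : ℝ) ∧ ∀ D' : ℝ, (q : ℝ) ≤ D' → Dbar s ≤ D' := by
  constructor
  · rcases eq_or_lt_of_le hsk with h | h
    · subst h
      have h1le : (1:ℝ) ≤ (D s : ℝ) := by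
        exact_mod_cast (hD s hk).1
      have : (q:ℝ) ≤ (D s : ℝ) := by exact_mod_cast hqD
      linarith
    · have hq' : (q:ℝ) < Dbar (s+1) := hsmax (s+1) (Nat.lt_succ_self s) h
      have hr := hrec (s+1) (by omega)
      simp only [Nat.add_sub_cancel] at hr
      by_cases hc : (D s : ℝ) < Dbar s
      · rw [if_pos hc] at hr
        rw [hr] at hq'
        linarith
      · rw [if_neg hc] at hr
        rw [hr] at hq'
        linarith
  · intro D' hD'
    linarith
end

section
/- Suppose the expected number of iterations of a sampler satisfies E[T] ≤ E[T_cap] + E[T_high] + 1, where every cap iteration unmasks exactly s_max of L total tokens (so T_cap ≤ L/s_max deterministically), and every high-entropy iteration t satisfies H(X^{D_t} | Π, W_{t-1}, X^{W_{t-1}}) > η pointwise, while E[ Σ_{t=1}^T H(X^{D_t} | Π, W_{t-1}, X^{W_{t-1}}) ] = H(X). Then E[T_high] ≤ H(X)/η, and consequently E[T] ≤ L/s_max + H(X)/η + 1. -/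
open Finset

/-- Iteration-count bound for the maximum entropy-based sampler: cap iterations contribute at
most `L/s_max`, high-entropy iterations at most `H(X)/η`, plus one final iteration. -/
theorem expected_iterations_max_entropy_le
    {α : Type*} [Fintype α]
    (p : α → ℝ) (hp0 : ∀ x, 0 ≤ p x) (hp1 : ∑ x, p x = 1)
    (L smax : ℕ) (hs1 : 1 ≤ smax) (hsL : smax ≤ L)
    (η HX : ℝ) (hη : 0 < η)
    (T Tcap Thigh : α → ℕ)
    (h : α → ℕ → ℝ) (hh : ∀ x t, 0 ≤ h x t)
    (Shigh : α → Finset ℕ)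
    (hsplit : ∀ x, T x ≤ Tcap x + Thigh x + 1)
    (hcap : ∀ x, Tcap x * smax ≤ L)
    (hsub : ∀ x, Shigh x ⊆ Finset.range (T x))
    (hcard : ∀ x, Thigh x = (Shigh x).card)
    (hhigh : ∀ x, ∀ t ∈ Shigh x, η < h x t)
    (hent : ∑ x, p x * ∑ t ∈ Finset.range (T x), h x t = HX) :
    (∑ x, p x * (Thigh x : ℝ) ≤ HX / η) ∧
      ∑ x, p x * (T x : ℝ) ≤ (L : ℝ) / smax + HX / η + 1 := by
  have hA : ∀ x, η * (Thigh x : ℝ) ≤ ∑ t ∈ Finset.range (T x), h x t := by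
    intro x
    calc η * (Thigh x : ℝ) = (Shigh x).card • η := by
          rw [hcard x]; rw [nsmul_eq_mul]; ring
      _ ≤ ∑ t ∈ Shigh x, h x t :=
          Finset.card_nsmul_le_sum _ _ _ (fun t ht => (hhigh x t ht).le)
      _ ≤ ∑ t ∈ Finset.range (T x), h x t :=
          Finset.sum_le_sum_of_subset_of_nonneg (hsub x) (fun t _ _ => hh x t)
  have h1 : ∑ x, p x * (Thigh x : ℝ) ≤ HX / η := by
    rw [le_div_iff₀ hη]
    calc (∑ x, p x * (Thigh x : ℝ)) * η = ∑ x, p x * (η * (Thigh x : ℝ)) := by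
          rw [Finset.sum_mul]; exact Finset.sum_congr rfl (fun x _ => by ring)
      _ ≤ ∑ x, p x * ∑ t ∈ Finset.range (T x), h x t :=
          Finset.sum_le_sum (fun x _ => mul_le_mul_of_nonneg_left (hA x) (hp0 x))
      _ = HX := hent
  refine ⟨h1, ?_⟩
  have hsm : (0:ℝ) < smax := by exact_mod_cast hs1
  have hB : ∀ x, (Tcap x : ℝ) ≤ (L : ℝ) / smax := by
    intro x
    rw [le_div_iff₀ hsm]
    exact_mod_cast hcap x
  calc ∑ x, p x * (T x : ℝ)
      ≤ ∑ x, p x * ((Tcap x : ℝ) + (Thigh x : ℝ) + 1) := by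
        refine Finset.sum_le_sum (fun x _ => mul_le_mul_of_nonneg_left ?_ (hp0 x))
        have := hsplit x
        push_cast
        exact_mod_cast this
    _ = ∑ x, p x * (Tcap x : ℝ) + ∑ x, p x * (Thigh x : ℝ) + ∑ x, p x := by
        rw [← Finset.sum_add_distrib, ← Finset.sum_add_distrib]
        exact Finset.sum_congr rfl (fun x _ => by ring)
    _ ≤ (L : ℝ) / smax + HX / η + 1 := by
        have : ∑ x, p x * (Tcap x : ℝ) ≤ ∑ x, p x * ((L : ℝ) / smax) :=
          Finset.sum_le_sum (fun x _ => mul_le_mul_of_nonneg_left (hB x) (hp0 x))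
        rw [← Finset.sum_mul, hp1, one_mul] at this
        rw [hp1]
        linarith
end
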